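/- arXiv:1611.01146 — 11 statements merged into one kernel-verified Lean document; each statement's English description precedes it below -/
import Mathlib

section
/- Let g ∈ ℝ^d, H a symmetric d×d matrix, L > 0, and define m(h) = ⟨g, h⟩ + (1/2)hᵀHh + (L/6)‖h‖³. If h* is a global minimizer of m and λ* = (L/2)‖h*‖, then g + (H + λ*I)h* = 0 and H + λ*I ⪰ 0. -/
open Matrix RealInnerProductSpace

noncomputable section

abbrev E (d : ℕ) := EuclideanSpace ℝ (Fin d)

/-- The cubic regularization model `m(h) = ⟨g,h⟩ + ½ hᵀHh + (L/6)‖h‖³`. -/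
def cubicModel {d : ℕ} (g : E d) (H : Matrix (Fin d) (Fin d) ℝ) (L : ℝ) (h : E d) : ℝ :=
  ⟪g, h⟫ + (1/2) * ⟪(Matrix.toEuclideanLin H) h, h⟫ + (L/6) * ‖h‖^3

/-- The minimum eigenvalue of a symmetric matrix, as the infimum of the Rayleigh quotient
over unit vectors. -/
def lamMin {d : ℕ} (H : Matrix (Fin d) (Fin d) ℝ) : ℝ :=
  sInf {r : ℝ | ∃ v : E d, ‖v‖ = 1 ∧ ⟪(Matrix.toEuclideanLin H) v, v⟫ = r}

/-- The minimum eigenvalue of the Hessian `∇²f(x)` of `f` at `x`, as the infimum of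
its Rayleigh quotient over unit vectors. -/
def hessLamMin {d : ℕ} (f : E d → ℝ) (x : E d) : ℝ :=
  sInf {r : ℝ | ∃ v : E d, ‖v‖ = 1 ∧ ⟪fderiv ℝ (gradient f) x v, v⟫ = r}

lemma sq_rpow_half' (r : ℝ) (hr : 0 ≤ r) : ((r^2 : ℝ)) ^ ((1:ℝ)/2) = r := by
  rw [← Real.rpow_natCast r 2, ← Real.rpow_mul hr]
  norm_num

lemma cube_rpow' {d : ℕ} (x : E d) : ‖x‖^3 = ((‖x‖^2 : ℝ)) ^ ((3:ℝ)/2) := by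
  rw [← Real.rpow_natCast ‖x‖ 2, ← Real.rpow_natCast ‖x‖ 3, ← Real.rpow_mul (norm_nonneg _)]
  norm_num

lemma hasDeriv_psi' (c0 c1 c2 r a w L : ℝ) (hr : 0 ≤ r) :
    HasDerivAt (fun t : ℝ => c0 + t*c1 + t^2*c2 + (L/6)*((r^2 + 2*a*t + w*t^2) ^ ((3:ℝ)/2)))
      (c1 + (L/2)*r*a) 0 := by
  have hu : HasDerivAt (fun t : ℝ => r^2 + 2*a*t + w*t^2) (2*a) 0 := by
    have h1 : HasDerivAt (fun t : ℝ => r^2 + 2*a*t + w*t^2)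
        (0 + 2*a*1 + w*(2*0^1)) 0 :=
      ((hasDerivAt_const (0:ℝ) (r^2)).add
        (((hasDerivAt_id (0:ℝ))).const_mul (2*a))).add ((hasDerivAt_pow 2 (0:ℝ)).const_mul w)
    convert h1 using 1; norm_num
  have hrpow : HasDerivAt (fun x : ℝ => x ^ ((3:ℝ)/2))
      ((3:ℝ)/2 * (r^2 + 2*a*(0:ℝ) + w*(0:ℝ)^2) ^ ((3:ℝ)/2 - 1)) (r^2 + 2*a*(0:ℝ) + w*(0:ℝ)^2) :=
    (Real.hasStrictDerivAt_rpow_const (Or.inr (by norm_num))).hasDerivAt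
  have hcomp := HasDerivAt.comp 0 hrpow hu
  have h1 : HasDerivAt (fun t : ℝ => c0 + t*c1 + t^2*c2) (c1) 0 := by
    have := ((hasDerivAt_const (0:ℝ) c0).add ((hasDerivAt_id (0:ℝ)).mul_const c1)).add
      ((hasDerivAt_pow 2 (0:ℝ)).mul_const c2)
    convert this using 1
    all_goals try rfl
    norm_num
  have := h1.add (hcomp.const_mul (L/6))
  convert this using 1
  all_goals try rfl
  have h0 : r^2 + 2*a*(0:ℝ) + w*(0:ℝ)^2 = r^2 := by ring
  rw [h0]
  have h2 : ((3:ℝ)/2 - 1) = (1:ℝ)/2 := by norm_num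
  rw [h2, sq_rpow_half' r hr]
  ring

set_option maxHeartbeats 1000000 in
theorem stmt_2 {d : ℕ} (g : E d) (H : Matrix (Fin d) (Fin d) ℝ) (hH : H.IsSymm)
    (L : ℝ) (hL : 0 < L) (hstar : E d)
    (hmin : ∀ h : E d, cubicModel g H L hstar ≤ cubicModel g H L h)
    (lam : ℝ) (hlam : lam = L/2 * ‖hstar‖) :
    g + (Matrix.toEuclideanLin (H + lam • 1)) hstar = 0 ∧ (H + lam • 1).PosSemidef := by
  have hHerm : H.IsHermitian := by
    rwa [Matrix.IsHermitian, conjTranspose_eq_transpose_of_trivial]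
  set T := Matrix.toEuclideanLin H with hT
  have hsymm : ∀ x y : E d, ⟪T x, y⟫ = ⟪x, T y⟫ := Matrix.isHermitian_iff_isSymmetric.1 hHerm
  have hr0 : (0:ℝ) ≤ ‖hstar‖ := norm_nonneg _
  -- expansion of the model around hstar
  have hexp : ∀ u : E d, cubicModel g H L (hstar + u) =
      cubicModel g H L hstar + ⟪g,u⟫ + ⟪T hstar,u⟫ + (1/2)*⟪T u,u⟫
        + (L/6)*(‖hstar+u‖^3 - ‖hstar‖^3) := by
    intro u
    have e0 : ⟪T u, hstar⟫ = ⟪T hstar, u⟫ := by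
      rw [hsymm u hstar, real_inner_comm]
    simp only [cubicModel, inner_add_right, map_add, inner_add_left, ← hT, e0]
    ring
  -- first-order condition
  have key1 : ∀ v : E d, ⟪g,v⟫ + ⟪T hstar,v⟫ + lam * ⟪hstar,v⟫ = 0 := by
    intro v
    set ψ : ℝ → ℝ := fun t =>
      (⟪g,hstar⟫ + (1/2)*⟪T hstar,hstar⟫) + t*(⟪g,v⟫ + ⟪T hstar,v⟫) + t^2*((1/2)*⟪T v,v⟫)
        + (L/6)*((‖hstar‖^2 + 2*⟪hstar,v⟫*t + ‖v‖^2*t^2) ^ ((3:ℝ)/2)) with hψdef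
    have hψeq : ∀ t : ℝ, cubicModel g H L (hstar + t • v) = ψ t := by
      intro t
      have e1 : ⟪g, t•v⟫ = t * ⟪g,v⟫ := real_inner_smul_right g v t
      have e2 : ⟪T hstar, t•v⟫ = t * ⟪T hstar, v⟫ := real_inner_smul_right _ v t
      have e3 : ⟪T (t•v), t•v⟫ = t^2*⟪T v,v⟫ := by
        rw [T.map_smul, real_inner_smul_left, real_inner_smul_right]; ring
      have e4 : ‖hstar + t•v‖^3 = (‖hstar‖^2 + 2*⟪hstar,v⟫*t + ‖v‖^2*t^2) ^ ((3:ℝ)/2) := by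
        rw [cube_rpow']
        congr 1
        rw [norm_add_sq_real, real_inner_smul_right, norm_smul, mul_pow, Real.norm_eq_abs, sq_abs]
        ring
      rw [hexp (t•v), e1, e2, e3, e4, hψdef]
      simp only [cubicModel]
      ring
    have hloc : IsLocalMin ψ 0 := by
      refine Filter.Eventually.of_forall (fun t => ?_)
      have h00 : ψ 0 = cubicModel g H L hstar := by
        rw [← hψeq 0]; simp
      rw [h00, ← hψeq t]
      exact hmin _
    have hd : HasDerivAt ψ ((⟪g,v⟫ + ⟪T hstar,v⟫) + (L/2)*‖hstar‖*⟪hstar,v⟫) 0 :=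
      hasDeriv_psi' _ _ _ _ _ _ _ hr0
    have hz := hloc.deriv_eq_zero
    rw [hd.deriv] at hz
    rw [hlam]
    linarith
  -- part 1
  have hlin : ∀ x : E d, Matrix.toEuclideanLin (H + lam • 1) x = T x + lam • x := by
    intro x
    simp [hT, Matrix.toEuclideanLin_apply, Matrix.add_mulVec, Matrix.smul_mulVec]
  have hw : g + T hstar + lam • hstar = 0 := by
    have h2 : ∀ v : E d, ⟪g + T hstar + lam • hstar, v⟫ = 0 := by
      intro v
      rw [inner_add_left, inner_add_left, real_inner_smul_left]
      linarith [key1 v]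
    exact inner_self_eq_zero.mp (h2 (g + T hstar + lam • hstar))
  have part1 : g + Matrix.toEuclideanLin (H + lam • 1) hstar = 0 := by
    rw [hlin hstar, ← add_assoc]
    exact hw
  -- sphere inequality
  have hsph : ∀ u : E d, ‖hstar + u‖ = ‖hstar‖ → 0 ≤ ⟪T u, u⟫ + lam * ‖u‖^2 := by
    intro u hu
    have hm := hmin (hstar + u)
    rw [hexp u, hu] at hm
    ring_nf at hm
    have hinner : 2*⟪hstar,u⟫ + ‖u‖^2 = 0 := by
      have hsq := norm_add_sq_real hstar u
      rw [hu] at hsq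
      linarith
    have h3 : lam * (2*⟪hstar,u⟫ + ‖u‖^2) = 0 := by rw [hinner, mul_zero]
    have hk := key1 u
    nlinarith [hm, hk, h3]
  -- nonzero-inner-product case
  have hq1 : ∀ v : E d, ⟪hstar, v⟫ ≠ 0 → 0 ≤ ⟪T v, v⟫ + lam * ‖v‖^2 := by
    intro v ha
    have hv : v ≠ 0 := fun h => ha (by simp [h])
    have hvn : (0:ℝ) < ‖v‖^2 := pow_pos (norm_pos_iff.mpr hv) 2
    set t : ℝ := -2*⟪hstar,v⟫/‖v‖^2 with ht
    have htne : t ≠ 0 := by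
      rw [ht]
      exact div_ne_zero (by simpa using ha) (ne_of_gt hvn)
    have hnorm : ‖hstar + t • v‖ = ‖hstar‖ := by
      have hsq : ‖hstar + t•v‖^2 = ‖hstar‖^2 := by
        rw [norm_add_sq_real, real_inner_smul_right, norm_smul, mul_pow, Real.norm_eq_abs, sq_abs, ht]
        field_simp
        ring
      nlinarith [norm_nonneg (hstar + t•v), norm_nonneg hstar, hsq]
    have h1 := hsph (t•v) hnorm
    have e1 : ⟪T (t•v), t•v⟫ = t^2 * ⟪T v, v⟫ := by
      rw [T.map_smul, real_inner_smul_left, real_inner_smul_right]; ring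
    have e2 : ‖t•v‖^2 = t^2*‖v‖^2 := by rw [norm_smul, mul_pow, Real.norm_eq_abs, sq_abs]
    rw [e1, e2] at h1
    have ht2 : 0 < t^2 := pow_two_pos_of_ne_zero htne
    nlinarith [h1, ht2]
  -- the quadratic form is nonneg everywhere
  have hq : ∀ v : E d, 0 ≤ ⟪T v, v⟫ + lam * ‖v‖^2 := by
    intro v
    by_cases ha : ⟪hstar, v⟫ ≠ 0
    · exact hq1 v ha
    push_neg at ha
    by_cases hs : hstar = 0
    · -- hstar = 0 : lam = 0, scaling argument
      have hlam0 : lam = 0 := by rw [hlam, hs]; simp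
      have hgv : ⟪g, v⟫ = 0 := by
        have := key1 v
        rw [hs] at this
        simpa using this
      by_cases hv : v = 0
      · simp [hv]
      have hvn : (0:ℝ) < ‖v‖ := norm_pos_iff.mpr hv
      have hbound : ∀ s : ℝ, 0 < s → -(L/3 * s * ‖v‖^3) ≤ ⟪T v, v⟫ := by
        intro s hs'
        have hm := hmin (s • v)
        have h0 : cubicModel g H L hstar = 0 := by rw [hs]; simp [cubicModel]
        have hmt : cubicModel g H L (s•v) =
            s*⟪g,v⟫ + (1/2)*(s^2*⟪T v,v⟫) + (L/6)*(s^3*‖v‖^3) := by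
          have e1 : ⟪g, s•v⟫ = s * ⟪g,v⟫ := real_inner_smul_right g v s
          have e3 : ⟪T (s•v), s•v⟫ = s^2*⟪T v,v⟫ := by
            rw [T.map_smul, real_inner_smul_left, real_inner_smul_right]; ring
          have e4 : ‖s•v‖^3 = s^3*‖v‖^3 := by
            rw [norm_smul, mul_pow, Real.norm_eq_abs, abs_of_pos hs']
          simp only [cubicModel, e1, ← hT, e3, e4]
        rw [h0, hmt, hgv] at hm
        nlinarith [hm, mul_pos hs' hs']
      have hq0 : 0 ≤ ⟪T v, v⟫ := by
        have hlim : Filter.Tendsto (fun s : ℝ => -(L/3 * s * ‖v‖^3))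
            (nhdsWithin 0 (Set.Ioi 0)) (nhds 0) := by
          have hc : Continuous fun s : ℝ => -(L/3 * s * ‖v‖^3) :=
            ((continuous_const.mul continuous_id).mul continuous_const).neg
          have := hc.tendsto 0
          simp only [mul_zero, zero_mul, neg_zero] at this
          exact this.mono_left nhdsWithin_le_nhds
        refine le_of_tendsto hlim ?_
        filter_upwards [self_mem_nhdsWithin] with s hs'
        exact hbound s hs'
      rw [hlam0]
      simpa using hq0
    · -- hstar ≠ 0 and ⟪hstar, v⟫ = 0 : perturbation
      have hrpos : (0:ℝ) < ‖hstar‖ := norm_pos_iff.mpr hs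
      set B : ℝ := ⟪T v, hstar⟫ + lam*⟪v,hstar⟫ with hB
      set C : ℝ := ⟪T hstar, hstar⟫ + lam*‖hstar‖^2 with hC
      have hb : ∀ ε : ℝ, 0 < ε →
          2*ε*B - ε^2*C ≤ ⟪T v,v⟫ + lam*‖v‖^2 := by
        intro ε hε
        have hav : ⟪hstar, v - ε•hstar⟫ ≠ 0 := by
          rw [inner_sub_right, real_inner_smul_right, ha, real_inner_self_eq_norm_sq]
          have : 0 < ε * ‖hstar‖^2 := mul_pos hε (pow_pos hrpos 2)
          intro hcon
          rw [zero_sub, neg_eq_zero] at hcon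
          exact (ne_of_gt this) hcon
        have hqq := hq1 (v - ε•hstar) hav
        have es : ⟪T hstar, v⟫ = ⟪T v, hstar⟫ := by
          rw [hsymm hstar v, real_inner_comm]
        have e1 : ⟪T (v-ε•hstar), v-ε•hstar⟫ =
            ⟪T v,v⟫ - 2*ε*⟪T v,hstar⟫ + ε^2*⟪T hstar,hstar⟫ := by
          simp only [map_sub, T.map_smul, inner_sub_left, inner_sub_right,
            real_inner_smul_left, real_inner_smul_right]
          rw [es]
          ring
        have e2 : ‖v-ε•hstar‖^2 = ‖v‖^2 - 2*ε*⟪v,hstar⟫ + ε^2*‖hstar‖^2 := by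
          rw [norm_sub_sq_real, real_inner_smul_right, norm_smul, mul_pow, Real.norm_eq_abs, sq_abs]
          ring
        rw [e1, e2] at hqq
        rw [hB, hC]
        nlinarith [hqq]
      have hlim : Filter.Tendsto (fun ε : ℝ => 2*ε*B - ε^2*C)
          (nhdsWithin 0 (Set.Ioi 0)) (nhds 0) := by
        have hc : Continuous fun ε : ℝ => 2*ε*B - ε^2*C :=
          ((continuous_const.mul continuous_id).mul continuous_const).sub
            ((continuous_pow 2).mul continuous_const)
        have := hc.tendsto 0
        simp only [mul_zero, zero_mul, ne_eq, OfNat.ofNat_ne_zero, not_false_eq_true,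
          zero_pow, sub_zero] at this
        exact this.mono_left nhdsWithin_le_nhds
      refine le_of_tendsto hlim ?_
      filter_upwards [self_mem_nhdsWithin] with ε hε
      exact hb ε hε
  -- assemble positive semidefiniteness
  have hpsd : (H + lam • 1).PosSemidef := by
    refine Matrix.posSemidef_iff_dotProduct_mulVec.2 ⟨?_, ?_⟩
    · have hsym2 : (H + lam • 1).IsSymm := by
        rw [Matrix.IsSymm] at hH ⊢
        simp [Matrix.transpose_add, hH]
      rwa [Matrix.IsHermitian, conjTranspose_eq_transpose_of_trivial]
    · intro x
      set v : E d := (WithLp.equiv 2 (Fin d → ℝ)).symm x with hv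
      have hx := hq v
      have hdot : star x ⬝ᵥ ((H + lam • 1) *ᵥ x) = ⟪Matrix.toEuclideanLin (H + lam • 1) v, v⟫ := by
        rw [EuclideanSpace.inner_eq_star_dotProduct]
        simp [hv, dotProduct_comm, Matrix.add_mulVec, Matrix.smul_mulVec,
          dotProduct_add, dotProduct_smul, smul_eq_mul]
      rw [hdot, hlin v, inner_add_left, real_inner_smul_left, real_inner_self_eq_norm_sq]
      exact hx
  exact ⟨part1, hpsd⟩
end
end

section
/- Let g ∈ ℝ^d, H a symmetric d×d matrix, L > 0, and m(h) = ⟨g, h⟩ + (1/2)hᵀHh + (L/6)‖h‖³. Suppose λ ≥ 0 and h ∈ ℝ^d satisfy H + λI ⪰ 0, (H + λI)h = −g, and ‖h‖ = 2λ/L. Then h is a global minimizer of m. -/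
open Matrix RealInnerProductSpace

noncomputable section

lemma psd_inner_nonneg {d : ℕ} {M : Matrix (Fin d) (Fin d) ℝ} (hM : M.PosSemidef)
    (x : E d) : 0 ≤ ⟪(Matrix.toEuclideanLin M) x, x⟫ := by
  have := hM.re_dotProduct_nonneg (WithLp.equiv 2 (Fin d → ℝ) x)
  simp only [RCLike.re_to_real] at this
  calc (0:ℝ) ≤ star ((WithLp.equiv 2 (Fin d → ℝ)) x) ⬝ᵥ M *ᵥ (WithLp.equiv 2 (Fin d → ℝ)) x := this
    _ = ⟪(Matrix.toEuclideanLin M) x, x⟫ := by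
        rw [Matrix.toEuclideanLin_apply]
        simp [PiLp.inner_apply, dotProduct, mul_comm]

lemma symm_inner {d : ℕ} {M : Matrix (Fin d) (Fin d) ℝ} (hM : M.IsHermitian)
    (x y : E d) : ⟪(Matrix.toEuclideanLin M) x, y⟫ = ⟪(Matrix.toEuclideanLin M) y, x⟫ := by
  have hs := Matrix.isHermitian_iff_isSymmetric.mp hM
  rw [hs x y, real_inner_comm]

theorem stmt_3 {d : ℕ} (g : E d) (H : Matrix (Fin d) (Fin d) ℝ) (hH : H.IsSymm)
    (L : ℝ) (hL : 0 < L) (lam : ℝ) (hlam : 0 ≤ lam) (h : E d)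
    (hpsd : (H + lam • 1).PosSemidef)
    (heq : (Matrix.toEuclideanLin (H + lam • 1)) h = -g)
    (hnorm : ‖h‖ = 2 * lam / L) :
    ∀ h' : E d, cubicModel g H L h ≤ cubicModel g H L h' := by
  intro h'
  set A := Matrix.toEuclideanLin (H + lam • 1) with hA
  have hherm : (H + lam • 1).IsHermitian := hpsd.1
  -- relation between ⟪H x, x⟫ and ⟪A x, x⟫
  have hAH : ∀ x : E d, ⟪(Matrix.toEuclideanLin H) x, x⟫ = ⟪A x, x⟫ - lam * ‖x‖^2 := by
    intro x
    have : A x = Matrix.toEuclideanLin H x + lam • x := by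
      rw [hA, map_add, LinearMap.add_apply]
      congr 1
      simp [Matrix.toEuclideanLin_apply]
    rw [this, inner_add_left, real_inner_smul_left, real_inner_self_eq_norm_sq]
    ring
  -- convexity of quadratic part
  have hq : 0 ≤ ⟪A (h' - h), h' - h⟫ := psd_inner_nonneg hpsd _
  have hexp : ⟪A (h' - h), h' - h⟫
      = ⟪A h', h'⟫ - 2 * ⟪A h, h'⟫ + ⟪A h, h⟫ := by
    rw [map_sub, inner_sub_left, inner_sub_right, inner_sub_right,
      symm_inner hherm h' h]
    ring
  have hAh : ∀ y : E d, ⟪A h, y⟫ = -⟪g, y⟫ := by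
    intro y; rw [heq, inner_neg_left]
  have key : ⟪g, h'⟫ + (1/2) * ⟪A h', h'⟫ ≥ ⟪g, h⟫ + (1/2) * ⟪A h, h⟫ := by
    have e1 := hAh h'
    have e2 := hAh h
    nlinarith [hq, hexp]
  -- norm inequality
  have hlam' : lam = L * ‖h‖ / 2 := by
    field_simp at hnorm; field_simp; linarith
  have hb : (0:ℝ) ≤ ‖h'‖ := norm_nonneg _
  have ha : (0:ℝ) ≤ ‖h‖ := norm_nonneg _
  have hcube : (L/6) * ‖h'‖^3 - (lam/2) * ‖h'‖^2 ≥ (L/6) * ‖h‖^3 - (lam/2) * ‖h‖^2 := by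
    rw [hlam']
    nlinarith [sq_nonneg (‖h'‖ - ‖h‖), mul_nonneg (mul_nonneg hL.le (sq_nonneg (‖h'‖ - ‖h‖))) hb]
  simp only [cubicModel]
  rw [hAH h, hAH h']
  linarith
end
end

section
/- Let g ∈ ℝ^d, H symmetric, L > 0, and m(h) = ⟨g, h⟩ + (1/2)hᵀHh + (L/6)‖h‖³. Suppose h* ∈ ℝ^d satisfies ∇m(h*) = 0, i.e., g + Hh* + (L/2)‖h*‖h* = 0, and let λ* = (L/2)‖h*‖. Then for every u ∈ ℝ^d with ‖h* + u‖ = ‖h*‖, one has m(h* + u) − m(h*) = (1/2)·uᵀ(H + λ*I)u. -/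
open Matrix RealInnerProductSpace

noncomputable section

theorem stmt_4 {d : ℕ} (g : E d) (H : Matrix (Fin d) (Fin d) ℝ) (hH : H.IsSymm)
    (L : ℝ) (hL : 0 < L) (hstar : E d)
    (hcrit : g + (Matrix.toEuclideanLin H) hstar + (L/2 * ‖hstar‖) • hstar = 0)
    (lam : ℝ) (hlam : lam = L/2 * ‖hstar‖) :
    ∀ u : E d, ‖hstar + u‖ = ‖hstar‖ →
      cubicModel g H L (hstar + u) - cubicModel g H L hstar
        = (1/2) * ⟪(Matrix.toEuclideanLin (H + lam • 1)) u, u⟫ := by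
  intro u hnorm
  set A := Matrix.toEuclideanLin H with hA
  have hsym : ∀ x y : E d, ⟪A x, y⟫ = ⟪x, A y⟫ := by
    have hHerm : H.IsHermitian := hH
    exact (Matrix.isHermitian_iff_isSymmetric.mp hHerm)
  have hg : g = -(A hstar) - lam • hstar := by
    rw [hlam]
    linear_combination (norm := module) hcrit
  have hip : ⟪hstar, u⟫ = -(1/2) * ‖u‖^2 := by
    have h2 : ‖hstar + u‖^2 = ‖hstar‖^2 := by rw [hnorm]
    rw [norm_add_sq_real] at h2
    nlinarith [h2]
  have hAone : Matrix.toEuclideanLin (H + lam • (1 : Matrix (Fin d) (Fin d) ℝ)) u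
      = A u + lam • u := by
    rw [map_add (Matrix.toEuclideanLin), LinearEquiv.map_smul]
    simp only [LinearMap.add_apply, LinearMap.smul_apply, hA]
    congr 1
    have : Matrix.toEuclideanLin (1 : Matrix (Fin d) (Fin d) ℝ) u = u := by
      ext i
      simp [Matrix.toEuclideanLin, Matrix.one_mulVec]
    rw [this]
  rw [hAone]
  have hAadd : A (hstar + u) = A hstar + A u := map_add A hstar u
  have hs : ⟪A u, hstar⟫ = ⟪A hstar, u⟫ := by
    rw [hsym u hstar, real_inner_comm]
  have hu2 : ⟪u, u⟫ = ‖u‖^2 := real_inner_self_eq_norm_sq u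
  have hip' : ⟪u, hstar⟫ = -(1/2) * ‖u‖^2 := by rw [real_inner_comm]; exact hip
  simp only [cubicModel, hnorm, hAadd, hg, ← hA, inner_add_left, inner_add_right,
    inner_sub_left, inner_neg_left, real_inner_smul_left, real_inner_smul_right,
    hs, hu2, hip, hip']
  ring
end
end

section
/- Let g ∈ ℝ^d, H symmetric, L > 0, and m(h) = ⟨g, h⟩ + (1/2)hᵀHh + (L/6)‖h‖³. If h* satisfies g + Hh* + (L/2)‖h*‖h* = 0, hᵀ(H + (L/2)‖h*‖I)h ≥ 0 for all h, then m(h*) ≤ −(L/12)‖h*‖³. In particular m(h*) ≤ 0. -/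
open Matrix RealInnerProductSpace

noncomputable section

lemma aux_smul_one {d : ℕ} (c : ℝ) (v : E d) :
    (Matrix.toEuclideanLin (c • (1 : Matrix (Fin d) (Fin d) ℝ))) v = c • v := by
  apply (WithLp.equiv 2 _).injective
  simp [Matrix.ofLp_toEuclideanLin_apply, Matrix.smul_mulVec, Matrix.one_mulVec]

theorem stmt_5 {d : ℕ} (g : E d) (H : Matrix (Fin d) (Fin d) ℝ) (hH : H.IsSymm)
    (L : ℝ) (hL : 0 < L) (hstar : E d)
    (hcrit : g + (Matrix.toEuclideanLin H) hstar + (L/2 * ‖hstar‖) • hstar = 0)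
    (hpsd : ∀ h : E d, 0 ≤ ⟪(Matrix.toEuclideanLin (H + (L/2 * ‖hstar‖) • 1)) h, h⟫) :
    cubicModel g H L hstar ≤ -(L/12) * ‖hstar‖^3 ∧ cubicModel g H L hstar ≤ 0 := by
  set n := ‖hstar‖ with hn
  have hn0 : 0 ≤ n := norm_nonneg _
  set a : ℝ := ⟪(Matrix.toEuclideanLin H) hstar, hstar⟫ with ha
  -- psd at hstar
  have h1 : 0 ≤ a + (L/2 * n) * n^2 := by
    have := hpsd hstar
    rw [map_add, LinearMap.add_apply, inner_add_left, aux_smul_one,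
      real_inner_smul_left, real_inner_self_eq_norm_sq] at this
    linarith [this]
  -- inner g hstar
  have hg : ⟪g, hstar⟫ = -a - (L/2 * n) * n^2 := by
    have hgval : g = -(Matrix.toEuclideanLin H) hstar - (L/2 * n) • hstar := by
      have h0 : g + ((Matrix.toEuclideanLin H) hstar + (L/2 * n) • hstar) = 0 := by
        rw [← add_assoc]; exact hcrit
      rw [eq_neg_of_add_eq_zero_left h0]; abel
    rw [hgval, inner_sub_left, inner_neg_left, real_inner_smul_left,
      real_inner_self_eq_norm_sq, ← ha]
  have key : cubicModel g H L hstar ≤ -(L/12) * n^3 := by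
    rw [cubicModel, hg, ← ha, ← hn]
    nlinarith [h1]
  exact ⟨key, key.trans (by nlinarith [pow_nonneg hn0 3])⟩
end
end

section
/- Let g ∈ ℝ^d, H symmetric, L > 0, and m(h) = ⟨g, h⟩ + (1/2)hᵀHh + (L/6)‖h‖³. Suppose λ ≥ 0 and h satisfy (H + λI)h = −g and ‖h‖ = 2λ/L, and suppose h = (H + λI)⁺g-part decomposition holds in the sense that h = −(H + λI)⁺g + γv for some γ ∈ ℝ and v in the kernel of H + λI (with γ = 0 if the kernel is trivial). Then m(h) = −(1/2)gᵀ(H + λI)⁺g − 2λ³/(3L²). -/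
open Matrix RealInnerProductSpace

noncomputable section

/-- The Moore–Penrose pseudo-inverse of a symmetric real matrix, via the spectral theorem
(inverting the nonzero eigenvalues; recall that in ℝ, 0⁻¹ = 0). -/
def symmPinv {d : ℕ} {M : Matrix (Fin d) (Fin d) ℝ} (hM : M.IsHermitian) :
    Matrix (Fin d) (Fin d) ℝ :=
  (hM.eigenvectorUnitary : Matrix (Fin d) (Fin d) ℝ)
    * Matrix.diagonal (fun i => (hM.eigenvalues i)⁻¹)
    * star (hM.eigenvectorUnitary : Matrix (Fin d) (Fin d) ℝ)

theorem stmt_6 {d : ℕ} (g : E d) (H : Matrix (Fin d) (Fin d) ℝ) (hH : H.IsSymm)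
    (L : ℝ) (hL : 0 < L) (lam : ℝ) (hlam : 0 ≤ lam) (h : E d)
    (hsym : (H + lam • 1).IsHermitian)
    (heq : (Matrix.toEuclideanLin (H + lam • 1)) h = -g)
    (hnorm : ‖h‖ = 2 * lam / L)
    (hdecomp : ∃ (γ : ℝ) (v : E d), (Matrix.toEuclideanLin (H + lam • 1)) v = 0 ∧
      h = -((Matrix.toEuclideanLin (symmPinv hsym)) g) + γ • v) :
    cubicModel g H L h
      = -(1/2) * ⟪g, (Matrix.toEuclideanLin (symmPinv hsym)) g⟫ - 2 * lam^3 / (3 * L^2) := by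

  obtain ⟨γ, v, hv, hhd⟩ := hdecomp
  have hsymm : (Matrix.toEuclideanLin (H + lam • 1)).IsSymmetric :=
    Matrix.isHermitian_iff_isSymmetric.mp hsym
  have hg : g = -(Matrix.toEuclideanLin (H + lam • 1)) h := by rw [heq]; simp
  have hgv : ⟪g, v⟫ = 0 := by
    rw [hg, inner_neg_left, hsymm h v, hv, inner_zero_right, neg_zero]
  have hgh : ⟪g, h⟫ = -⟪g, (Matrix.toEuclideanLin (symmPinv hsym)) g⟫ := by
    rw [hhd, inner_add_right, inner_neg_right, real_inner_smul_right, hgv]; ring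
  have hHh : (Matrix.toEuclideanLin H) h = -g - lam • h := by
    have h1 : (Matrix.toEuclideanLin (H + lam • 1)) h
        = (Matrix.toEuclideanLin H) h + lam • h := by
      have e1 : Matrix.toEuclideanLin (1 : Matrix (Fin d) (Fin d) ℝ) h = h := by
        simp [Matrix.toEuclideanLin_eq_toLin]
      rw [map_add, LinearMap.add_apply, _root_.map_smul, LinearMap.smul_apply, e1]
    rw [h1] at heq
    linear_combination (norm := module) heq
  have hHhh : ⟪(Matrix.toEuclideanLin H) h, h⟫
      = ⟪g, (Matrix.toEuclideanLin (symmPinv hsym)) g⟫ - lam * ‖h‖ ^ 2 := by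
    rw [hHh]
    simp only [inner_sub_left, inner_neg_left, real_inner_smul_left,
      real_inner_self_eq_norm_sq]
    linarith [hgh]
  have hL' : L ≠ 0 := ne_of_gt hL
  rw [cubicModel, hHhh, hgh, hnorm]
  field_simp
  ring
end
end

section
/- Let H be a symmetric d×d matrix, g ∈ ℝ^d, and L > 0. The map p(y) = 2y/L − ‖(H + yI)^{-1}g‖ is strictly monotonically increasing on the interval (−λ_min(H), ∞). -/
open Matrix RealInnerProductSpace

noncomputable section

lemma rayleigh_ge {d : ℕ} (H : Matrix (Fin d) (Fin d) ℝ) (v : E d) :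
    lamMin H * ‖v‖^2 ≤ ⟪(Matrix.toEuclideanLin H) v, v⟫ := by
  rcases eq_or_ne v 0 with rfl | hv
  · simp
  · set S : Set ℝ := {r : ℝ | ∃ v : E d, ‖v‖ = 1 ∧ ⟪(Matrix.toEuclideanLin H) v, v⟫ = r}
    have hcont : Continuous fun w : E d => ⟪(Matrix.toEuclideanLin H) w, w⟫ :=
      Continuous.inner ((Matrix.toEuclideanLin H).continuous_of_finiteDimensional) continuous_id
    have hS : S = (fun w : E d => ⟪(Matrix.toEuclideanLin H) w, w⟫) '' Metric.sphere 0 1 := by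
      ext r; simp [S, Set.mem_image, mem_sphere_zero_iff_norm, eq_comm, and_comm]
    have hbdd : BddBelow S := by
      rw [hS]
      exact ((isCompact_sphere (0 : E d) 1).image hcont).bddBelow
    set u : E d := ‖v‖⁻¹ • v with hu
    have hnv : (0:ℝ) < ‖v‖ := norm_pos_iff.mpr hv
    have hun : ‖u‖ = 1 := by
      rw [hu, norm_smul]; simp [abs_of_pos (inv_pos.mpr hnv), inv_mul_cancel₀ hnv.ne']
    have hmem : ⟪(Matrix.toEuclideanLin H) u, u⟫ ∈ S := ⟨u, hun, rfl⟩
    have hle : lamMin H ≤ ⟪(Matrix.toEuclideanLin H) u, u⟫ := csInf_le hbdd hmem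
    have hscale : ⟪(Matrix.toEuclideanLin H) v, v⟫ = ‖v‖^2 * ⟪(Matrix.toEuclideanLin H) u, u⟫ := by
      rw [hu, _root_.map_smul, real_inner_smul_left, real_inner_smul_right]
      field_simp
    rw [hscale]
    calc lamMin H * ‖v‖^2 ≤ ⟪(Matrix.toEuclideanLin H) u, u⟫ * ‖v‖^2 :=
          mul_le_mul_of_nonneg_right hle (by positivity)
      _ = ‖v‖^2 * ⟪(Matrix.toEuclideanLin H) u, u⟫ := by ring

lemma shift_apply {d : ℕ} (H : Matrix (Fin d) (Fin d) ℝ) (y : ℝ) (v : E d) :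
    (Matrix.toEuclideanLin (H + y • 1)) v = (Matrix.toEuclideanLin H) v + y • v := by
  apply (WithLp.equiv 2 (Fin d → ℝ)).injective
  simp only [Matrix.toEuclideanLin_apply, Matrix.add_mulVec, Matrix.smul_mulVec,
    Matrix.one_mulVec, Equiv.apply_symm_apply]
  rfl

lemma shift_inner_ge {d : ℕ} (H : Matrix (Fin d) (Fin d) ℝ) {y : ℝ} (hy : -(lamMin H) < y)
    (v : E d) : (lamMin H + y) * ‖v‖^2 ≤ ⟪(Matrix.toEuclideanLin (H + y • 1)) v, v⟫ := by
  rw [shift_apply, inner_add_left, real_inner_smul_left, real_inner_self_eq_norm_sq]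
  nlinarith [rayleigh_ge H v]

lemma shift_isUnit {d : ℕ} (H : Matrix (Fin d) (Fin d) ℝ) {y : ℝ} (hy : -(lamMin H) < y) :
    IsUnit (H + y • 1) := by
  rw [← Matrix.mulVec_injective_iff_isUnit]
  intro a b hab
  have h1 : Matrix.toEuclideanLin (H + y • 1) ((WithLp.equiv 2 _).symm a)
      = Matrix.toEuclideanLin (H + y • 1) ((WithLp.equiv 2 _).symm b) := by
    simp only [Matrix.toEuclideanLin_apply, Equiv.apply_symm_apply, WithLp.equiv_symm_apply, WithLp.ofLp_toLp, hab]
  have h2 : ∀ w : E d, Matrix.toEuclideanLin (H + y • 1) w = 0 → w = 0 := by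
    intro w hw
    by_contra hwne
    have h3 := shift_inner_ge H hy w
    rw [hw] at h3
    simp only [inner_zero_left] at h3
    have hp : (0:ℝ) < (lamMin H + y) * ‖w‖^2 := by
      have h4 : 0 < lamMin H + y := by linarith
      have h5 : 0 < ‖w‖ := norm_pos_iff.mpr hwne
      positivity
    linarith
  have h6 := h2 (((WithLp.equiv 2 _).symm a) - ((WithLp.equiv 2 _).symm b))
    (by rw [map_sub, h1, sub_self])
  exact (WithLp.equiv 2 _).symm.injective (sub_eq_zero.mp h6)

lemma toEuclideanLin_mul_apply {d : ℕ} (A B : Matrix (Fin d) (Fin d) ℝ) (v : E d) :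
    Matrix.toEuclideanLin (A * B) v = Matrix.toEuclideanLin A (Matrix.toEuclideanLin B v) := by
  apply (WithLp.equiv 2 (Fin d → ℝ)).injective
  simp only [Matrix.toEuclideanLin_apply, Equiv.apply_symm_apply, Matrix.mulVec_mulVec]

theorem stmt_8 {d : ℕ} (g : E d) (H : Matrix (Fin d) (Fin d) ℝ) (hH : H.IsSymm)
    (L : ℝ) (hL : 0 < L) :
    StrictMonoOn (fun y : ℝ => 2 * y / L - ‖(Matrix.toEuclideanLin ((H + y • 1)⁻¹)) g‖)
      (Set.Ioi (-(lamMin H))) := by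
  intro y₁ hy₁ y₂ hy₂ hlt
  simp only [Set.mem_Ioi] at hy₁ hy₂
  have hU₁ := shift_isUnit H hy₁
  have hU₂ := shift_isUnit H hy₂
  set x := Matrix.toEuclideanLin (H + y₁ • 1)⁻¹ g with hx
  set w := Matrix.toEuclideanLin (H + y₂ • 1)⁻¹ g with hw
  have hAx : Matrix.toEuclideanLin (H + y₁ • 1) x = g := by
    rw [hx, ← toEuclideanLin_mul_apply,
      Matrix.mul_nonsing_inv _ ((Matrix.isUnit_iff_isUnit_det _).mp hU₁)]
    apply (WithLp.equiv 2 (Fin d → ℝ)).injective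
    simp only [Matrix.toEuclideanLin_apply, Equiv.apply_symm_apply, Matrix.one_mulVec]
  have hAw : Matrix.toEuclideanLin (H + y₂ • 1) w = g := by
    rw [hw, ← toEuclideanLin_mul_apply,
      Matrix.mul_nonsing_inv _ ((Matrix.isUnit_iff_isUnit_det _).mp hU₂)]
    apply (WithLp.equiv 2 (Fin d → ℝ)).injective
    simp only [Matrix.toEuclideanLin_apply, Equiv.apply_symm_apply, Matrix.one_mulVec]
  have hkey : Matrix.toEuclideanLin (H + y₁ • 1) (x - w) = (y₂ - y₁) • w := by
    have e1 : Matrix.toEuclideanLin (H + y₂ • 1) w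
        = Matrix.toEuclideanLin (H + y₁ • 1) w + (y₂ - y₁) • w := by
      rw [shift_apply, shift_apply, sub_smul]
      abel
    rw [map_sub, hAx, ← hAw, e1]
    abel
  have hpos1 : (0:ℝ) ≤ ⟪Matrix.toEuclideanLin (H + y₁ • 1) (x - w), x - w⟫ := by
    refine le_trans ?_ (shift_inner_ge H hy₁ (x - w))
    have h0 : 0 ≤ lamMin H + y₁ := by linarith
    positivity
  have hinner : ‖w‖^2 ≤ ⟪w, x⟫ := by
    rw [hkey, real_inner_smul_left] at hpos1
    have hc : (0:ℝ) < y₂ - y₁ := by linarith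
    have h7 : (0:ℝ) ≤ ⟪w, x - w⟫ := (mul_nonneg_iff_of_pos_left hc).mp hpos1
    rw [inner_sub_right, real_inner_self_eq_norm_sq] at h7
    linarith
  have hnorm : ‖w‖ ≤ ‖x‖ := by
    rcases eq_or_ne w 0 with hw0 | hw0
    · rw [hw0]; simp
    · have hcs : ⟪w, x⟫ ≤ ‖w‖ * ‖x‖ := real_inner_le_norm w x
      have hwpos : 0 < ‖w‖ := norm_pos_iff.mpr hw0
      nlinarith
  have hdiv : 2 * y₁ / L < 2 * y₂ / L := (div_lt_div_iff_of_pos_right hL).mpr (by linarith)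
  simp only
  linarith
end
end

section
/- Let f : ℝ^d → ℝ be C² with L-Lipschitz Hessian, fix x ∈ ℝ^d, set g = ∇f(x), H = ∇²f(x), and m(h) = ⟨g, h⟩ + (1/2)hᵀHh + (L/6)‖h‖³. Then for every h ∈ ℝ^d, ‖∇f(x + h)‖ ≤ L‖h‖² + ‖∇m(h)‖, where ∇m(h) = g + Hh + (L/2)‖h‖h. -/
open Matrix RealInnerProductSpace

noncomputable section

theorem stmt_11 {d : ℕ} (L : ℝ) (hL : 0 < L) (f : E d → ℝ) (hf : ContDiff ℝ 2 f)
    (hLip : ∀ y z : E d, ‖fderiv ℝ (gradient f) y - fderiv ℝ (gradient f) z‖ ≤ L * ‖y - z‖)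
    (x : E d) :
    ∀ h : E d,
      ‖gradient f (x + h)‖
        ≤ L * ‖h‖^2 + ‖gradient f x + fderiv ℝ (gradient f) x h + (L/2 * ‖h‖) • h‖ := by
  intro h
  set F := gradient f with hFdef
  -- F is differentiable
  have hFc : ContDiff ℝ 1 F := by
    have h1 : ContDiff ℝ 1 (fderiv ℝ f) := hf.fderiv_right (by norm_num)
    have : F = fun y => (InnerProductSpace.toDual ℝ (E d)).symm (fderiv ℝ f y) := rfl
    rw [this]
    exact (InnerProductSpace.toDual ℝ (E d)).symm.contDiff.comp h1
  have hFd : Differentiable ℝ F := hFc.differentiable one_ne_zero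
  -- Taylor estimate: ‖F (x+h) - F x - fderiv F x h‖ ≤ L/2 * ‖h‖^2
  set Hh := fderiv ℝ F x h with hHh
  set φ : ℝ → E d := fun t => F (x + t • h) - t • Hh - F x with hφ
  have hφ' : ∀ t : ℝ, HasDerivAt φ (fderiv ℝ F (x + t • h) h - Hh) t := by
    intro t
    have h1 : HasDerivAt (fun t : ℝ => x + t • h) h t := by
      simpa using ((hasDerivAt_id' t).smul_const h).const_add x
    have h2 : HasDerivAt (fun t : ℝ => F (x + t • h)) (fderiv ℝ F (x + t • h) h) t :=
      by have := (hFd (x + t • h)).hasFDerivAt.comp_hasDerivAt t h1; exact this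
    have := (h2.sub ((hasDerivAt_id' t).smul_const Hh)).sub (hasDerivAt_const t (F x))
    simp only [one_smul, sub_zero] at this
    exact this
  have hB : ∀ t : ℝ, HasDerivAt (fun t => L / 2 * ‖h‖ ^ 2 * (t * t)) (L * ‖h‖ ^ 2 * t) t := by
    intro t
    have : HasDerivAt (fun t => L / 2 * ‖h‖ ^ 2 * (t * t))
        (0 * (t * t) + L / 2 * ‖h‖ ^ 2 * (1 * t + t * 1)) t :=
      (hasDerivAt_const t (L / 2 * ‖h‖ ^ 2)).mul ((hasDerivAt_id' t).mul (hasDerivAt_id' t))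
    convert this using 1
    ring
  have hbound : ∀ t ∈ Set.Ico (0 : ℝ) 1, ‖fderiv ℝ F (x + t • h) h - Hh‖ ≤ L * ‖h‖ ^ 2 * t := by
    intro t ht
    have : fderiv ℝ F (x + t • h) h - Hh = (fderiv ℝ F (x + t • h) - fderiv ℝ F x) h := by
      simp [Hh]
    rw [this]
    calc ‖(fderiv ℝ F (x + t • h) - fderiv ℝ F x) h‖
        ≤ ‖fderiv ℝ F (x + t • h) - fderiv ℝ F x‖ * ‖h‖ :=
          (fderiv ℝ F (x + t • h) - fderiv ℝ F x).le_opNorm h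
      _ ≤ (L * ‖x + t • h - x‖) * ‖h‖ := by
          gcongr; exact hLip _ _
      _ = L * ‖h‖ ^ 2 * t := by
          have : x + t • h - x = t • h := by abel
          rw [this, norm_smul, Real.norm_eq_abs, abs_of_nonneg ht.1]
          ring
  have key : ∀ t ∈ Set.Icc (0 : ℝ) 1, ‖φ t‖ ≤ L / 2 * ‖h‖ ^ 2 * (t * t) := by
    apply image_norm_le_of_norm_deriv_right_le_deriv_boundary
      (f' := fun t => fderiv ℝ F (x + t • h) h - Hh)
    · exact fun t _ => ((hφ' t).continuousAt).continuousWithinAt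
    · exact fun t _ => (hφ' t).hasDerivWithinAt
    · simp [hφ]
    · exact hB
    · exact hbound
  have taylor : ‖F (x + h) - F x - Hh‖ ≤ L / 2 * ‖h‖ ^ 2 := by
    have := key 1 (by norm_num)
    simpa [hφ, sub_sub, add_comm (Hh) (F x)] using this
  -- final triangle inequality chain
  have hsn : ‖(L / 2 * ‖h‖) • h‖ = L / 2 * ‖h‖ ^ 2 := by
    rw [norm_smul, Real.norm_eq_abs, abs_of_nonneg (by positivity)]
    ring
  calc ‖F (x + h)‖
      ≤ ‖F (x + h) - F x - Hh‖ + ‖F x + Hh‖ := by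
        have h1 := norm_add_le (F (x + h) - F x - Hh) (F x + Hh)
        have h2 : F (x + h) - F x - Hh + (F x + Hh) = F (x + h) := by abel
        rwa [h2] at h1
    _ ≤ L / 2 * ‖h‖ ^ 2 + (‖F x + Hh + (L / 2 * ‖h‖) • h‖ + ‖(L / 2 * ‖h‖) • h‖) := by
        gcongr
        have h1 := norm_sub_le (F x + Hh + (L / 2 * ‖h‖) • h) ((L / 2 * ‖h‖) • h)
        have h2 : F x + Hh + (L / 2 * ‖h‖) • h - (L / 2 * ‖h‖) • h = F x + Hh := by abel
        rwa [h2] at h1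
    _ ≤ L * ‖h‖ ^ 2 + ‖F x + Hh + (L / 2 * ‖h‖) • h‖ := by
        rw [hsn]; nlinarith [sq_nonneg ‖h‖]
end
end

section
/- Let f : ℝ^d → ℝ be C² with L-Lipschitz Hessian, x ∈ ℝ^d, g = ∇f(x), H = ∇²f(x), m(h) = ⟨g, h⟩ + (1/2)hᵀHh + (L/6)‖h‖³, and let m* = inf_h m(h). Then for every h' ∈ ℝ^d, λ_min(∇²f(x + h')) ≥ −(3L² · max{0, −m*}/2)^{1/3} − L‖h'‖. -/
open Matrix RealInnerProductSpace

noncomputable section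

set_option maxHeartbeats 800000 in
theorem stmt_12 {d : ℕ} (L : ℝ) (hL : 0 < L) (f : E d → ℝ) (hf : ContDiff ℝ 2 f)
    (hLip : ∀ y z : E d, ‖fderiv ℝ (gradient f) y - fderiv ℝ (gradient f) z‖ ≤ L * ‖y - z‖)
    (x : E d)
    (m : E d → ℝ)
    (hm : ∀ h : E d, m h = ⟪gradient f x, h⟫ + (1/2) * ⟪fderiv ℝ (gradient f) x h, h⟫
      + (L/6) * ‖h‖^3)
    (mstar : ℝ) (hmstar : mstar = ⨅ h : E d, m h) :
    ∀ h' : E d,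
      hessLamMin f (x + h')
        ≥ -(3 * L^2 * max 0 (-mstar) / 2) ^ ((1:ℝ)/3) - L * ‖h'‖ := by
  intro h'
  set g : E d := gradient f x with hg
  set A : E d →L[ℝ] E d := fderiv ℝ (gradient f) x with hA
  set B : ℝ := (3 * L^2 * max 0 (-mstar) / 2) ^ ((1:ℝ)/3) with hB
  have hBnn : 0 ≤ B := Real.rpow_nonneg (by positivity) _
  -- m is bounded below
  have hbdd : BddBelow (Set.range m) := by
    set a : ℝ := ‖g‖ with ha'
    set b : ℝ := ‖A‖ with hb'
    have ha : 0 ≤ a := norm_nonneg _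
    have hb : 0 ≤ b := norm_nonneg _
    set R : ℝ := max 1 ((6/L)*(a + b/2)) with hR'
    refine ⟨-(a + b/2) * R^2, ?_⟩
    rintro _ ⟨h, rfl⟩
    have hR1 : 1 ≤ R := le_max_left _ _
    have hR2 : (6/L)*(a + b/2) ≤ R := le_max_right _ _
    have ht : 0 ≤ ‖h‖ := norm_nonneg h
    have hgh : -(a * ‖h‖) ≤ ⟪g, h⟫ := by
      have h1 := abs_real_inner_le_norm g h
      have h2 := neg_abs_le ⟪g, h⟫
      linarith
    have hAh : -(b * ‖h‖^2) ≤ ⟪A h, h⟫ := by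
      have h1 := abs_real_inner_le_norm (A h) h
      have h2 := neg_abs_le ⟪A h, h⟫
      have h3 : ‖A h‖ ≤ b * ‖h‖ := A.le_opNorm h
      nlinarith [norm_nonneg (A h)]
    rw [hm]
    rcases le_or_gt ‖h‖ R with hc | hc
    · have e1 : a * ‖h‖ ≤ a * R := by nlinarith
      have esq : ‖h‖^2 ≤ R^2 := by nlinarith
      have e2 : b * ‖h‖^2 ≤ b * R^2 := mul_le_mul_of_nonneg_left esq hb
      have e3 : a * R ≤ a * R^2 := by
        nlinarith [mul_nonneg (mul_nonneg ha (by linarith : (0:ℝ) ≤ R))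
          (by linarith : (0:ℝ) ≤ R - 1)]
      nlinarith [mul_nonneg (le_of_lt hL) (pow_nonneg ht 3)]
    · have h1R : (1:ℝ) ≤ ‖h‖ := le_trans hR1 (le_of_lt hc)
      have e0 : a + b/2 ≤ (L/6) * ‖h‖ := by
        have : (6/L)*(a + b/2) ≤ ‖h‖ := le_trans hR2 (le_of_lt hc)
        calc a + b/2 = (L/6) * ((6/L)*(a + b/2)) := by field_simp
          _ ≤ (L/6) * ‖h‖ := mul_le_mul_of_nonneg_left this (by positivity)
      have e1 : (a + b/2) * ‖h‖^2 ≤ (L/6) * ‖h‖^3 := by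
        nlinarith [mul_le_mul_of_nonneg_right e0 (sq_nonneg ‖h‖)]
      have e2 : a * ‖h‖ + (b/2) * ‖h‖^2 ≤ (a + b/2) * ‖h‖^2 := by
        nlinarith [mul_nonneg (mul_nonneg ha ht) (by linarith : (0:ℝ) ≤ ‖h‖ - 1)]
      linarith [mul_nonneg (add_nonneg ha (by linarith : (0:ℝ) ≤ b/2)) (sq_nonneg R)]
  -- key pointwise bound at x
  have key : ∀ v : E d, ‖v‖ = 1 → -B ≤ ⟪A v, v⟫ := by
    intro v hv
    set r : ℝ := ⟪A v, v⟫ with hr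
    rcases le_or_gt 0 r with h0 | h0
    · linarith
    · set t : ℝ := -2*r/L with ht'
      have ht : 0 < t := by
        apply div_pos (by linarith) hL
      set s : ℝ := if ⟪g, v⟫ ≤ 0 then t else -t with hs'
      have hs2 : s^2 = t^2 := by
        rw [hs']; split_ifs <;> ring
      have hgs : s * ⟪g, v⟫ ≤ 0 := by
        rw [hs']; split_ifs with hc
        · exact mul_nonpos_of_nonneg_of_nonpos (le_of_lt ht) hc
        · exact mul_nonpos_of_nonpos_of_nonneg (by linarith) (by linarith)
      have hnorm : ‖s • v‖ = t := by
        rw [norm_smul, hv, mul_one, Real.norm_eq_abs, hs']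
        split_ifs
        · exact abs_of_pos ht
        · rw [abs_neg]; exact abs_of_pos ht
      have hmv : m (s • v) = s * ⟪g, v⟫ + (1/2) * (s^2 * r) + (L/6) * t^3 := by
        have e1 : ⟪g, s • v⟫ = s * ⟪g, v⟫ := real_inner_smul_right g v s
        have e2 : ⟪A (s • v), s • v⟫ = s^2 * r := by
          rw [A.map_smul, real_inner_smul_left, real_inner_smul_right]
          ring
        rw [hm, hnorm, e1, e2]
      have h1 : mstar ≤ m (s • v) := by
        rw [hmstar]; exact ciInf_le hbdd (s • v)
      have h2 : m (s • v) ≤ (2/3) * r^3 / L^2 := by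
        rw [hmv, hs2, ht']
        have hL' : L ≠ 0 := ne_of_gt hL
        have : (1/2) * ((-2*r/L)^2 * r) + (L/6) * (-2*r/L)^3 = (2/3) * r^3 / L^2 := by
          field_simp; ring
        linarith
      have h3 : (-r)^3 ≤ 3 * L^2 * max 0 (-mstar) / 2 := by
        have hmx : (2/3) * (-r)^3 / L^2 ≤ max 0 (-mstar) := by
          have : (2/3) * (-r)^3 / L^2 ≤ -mstar := by
            have : -((2/3) * r^3 / L^2) = (2/3) * (-r)^3 / L^2 := by ring
            linarith [h1, h2]
          exact le_trans this (le_max_right _ _)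
        have hL2 : (0:ℝ) < L^2 := by positivity
        rw [div_le_iff₀ hL2] at hmx
        nlinarith
      have h4 : -r ≤ B := by
        have hr0 : (0:ℝ) ≤ -r := by linarith
        have heq : -r = ((-r)^3) ^ ((1:ℝ)/3) := by
          rw [← Real.rpow_natCast (-r) 3, ← Real.rpow_mul hr0]
          norm_num
        rw [heq, hB]
        exact Real.rpow_le_rpow (by positivity) h3 (by norm_num)
      linarith
  -- transfer to x + h'
  have hbound : ∀ rr ∈ {r : ℝ | ∃ v : E d, ‖v‖ = 1 ∧
      ⟪fderiv ℝ (gradient f) (x + h') v, v⟫ = r}, -B - L * ‖h'‖ ≤ rr := by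
    rintro rr ⟨v, hv, rfl⟩
    set A' : E d →L[ℝ] E d := fderiv ℝ (gradient f) (x + h') with hA'
    have hdiff : ‖A' - A‖ ≤ L * ‖h'‖ := by
      have h0 := hLip (x + h') x
      rwa [add_sub_cancel_left] at h0
    have h1 : |⟪(A' - A) v, v⟫| ≤ L * ‖h'‖ := by
      have h2 := abs_real_inner_le_norm ((A' - A) v) v
      have h3 : ‖(A' - A) v‖ ≤ ‖A' - A‖ * ‖v‖ := (A' - A).le_opNorm v
      rw [hv] at h2 h3
      nlinarith [norm_nonneg ((A' - A) v)]
    have h2 : ⟪A' v, v⟫ = ⟪A v, v⟫ + ⟪(A' - A) v, v⟫ := by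
      rw [ContinuousLinearMap.sub_apply, inner_sub_left]; ring
    have h3 := key v hv
    have h4 := neg_abs_le ⟪(A' - A) v, v⟫
    linarith
  show -B - L * ‖h'‖ ≤ hessLamMin f (x + h')
  unfold hessLamMin
  rcases Set.eq_empty_or_nonempty {r : ℝ | ∃ v : E d, ‖v‖ = 1 ∧
      ⟪fderiv ℝ (gradient f) (x + h') v, v⟫ = r} with hemp | hne
  · rw [hemp, Real.sInf_empty]
    have : 0 ≤ L * ‖h'‖ := mul_nonneg (le_of_lt hL) (norm_nonneg _)
    linarith
  · exact le_csInf hne hbound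
end
end

section
/- Let H be symmetric with λ_min(H) < 0, g ∈ ℝ^d, L > 0, and let ν be a unit eigenvector of H for the eigenvalue λ_min(H). Define h̃ = sign(⟨g, ν⟩) · (2λ_min(H)/L) · ν (with sign(0) := 1). Then m(h̃) ≤ 2λ_min(H)³/(3L²), where m(h) = ⟨g, h⟩ + (1/2)hᵀHh + (L/6)‖h‖³. Consequently inf_h m(h) ≤ 2λ_min(H)³/(3L²), so λ_min(H) ≥ −(3L²·|inf_h m(h)|/2)^{1/3}. -/
open Matrix RealInnerProductSpace

noncomputable section

/-- Lower bound for the scalar cubic `c t³ - (b/2)t² - a t` on `t ≥ 0`. -/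
lemma cubic_lower (a b c t : ℝ) (ha : 0 ≤ a) (hb : 0 ≤ b) (hc : 0 < c) (ht : 0 ≤ t) :
    -(16*(b/2+a/2)^3/c^2 + a/2) ≤ -(a*t) - (1/2)*(b*t^2) + c*t^3 := by
  have hb'0 : 0 ≤ b/2 + a/2 := by linarith
  rcases le_or_gt t (4*(b/2+a/2)/c) with hcase | hcase
  · have h5 : c*t ≤ 4*(b/2+a/2) := by
      rw [le_div_iff₀ hc] at hcase; linarith
    have h6 : c^2*t^2 ≤ 16*(b/2+a/2)^2 := by
      nlinarith [mul_nonneg hc.le ht, mul_le_mul h5 h5 (mul_nonneg hc.le ht) (by linarith)]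
    have h7 : (b/2+a/2)*t^2 ≤ 16*(b/2+a/2)^3/c^2 := by
      rw [le_div_iff₀ (by positivity)]
      nlinarith
    nlinarith [mul_nonneg (mul_nonneg hc.le ht) (mul_nonneg ht ht), sq_nonneg (t-1),
      mul_nonneg ha (sq_nonneg (t-1))]
  · have h5 : 4*(b/2+a/2) ≤ c*t := by
      have := (div_le_iff₀ hc).mp hcase.le; linarith
    have h6 : (b/2+a/2)*t^2 ≤ (c/4)*t^3 := by
      nlinarith [mul_nonneg (sub_nonneg.mpr h5) (sq_nonneg t)]
    nlinarith [mul_nonneg ha (sq_nonneg (t-1)),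
      div_nonneg (by positivity : (0:ℝ) ≤ 16*(b/2+a/2)^3) (by positivity : (0:ℝ) ≤ c^2)]

/-- The cubic regularization model is bounded below. -/
lemma cubicModel_bddBelow {d : ℕ} (g : E d) (H : Matrix (Fin d) (Fin d) ℝ) (L : ℝ)
    (hL : 0 < L) : BddBelow (Set.range (fun h => cubicModel g H L h)) := by
  have hc : (0:ℝ) < L/6 := by positivity
  refine ⟨-(16*(‖LinearMap.toContinuousLinearMap (Matrix.toEuclideanLin H)‖/2+‖g‖/2)^3/(L/6)^2
      + ‖g‖/2), ?_⟩
  rintro x ⟨h, rfl⟩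
  have i1 : -(‖g‖*‖h‖) ≤ ⟪g, h⟫ := by
    have h1 := abs_real_inner_le_norm g h
    have h2 := neg_abs_le (⟪g, h⟫ : ℝ)
    linarith
  have i2 : -(‖LinearMap.toContinuousLinearMap (Matrix.toEuclideanLin H)‖*‖h‖^2)
      ≤ ⟪(Matrix.toEuclideanLin H) h, h⟫ := by
    have e1 : (Matrix.toEuclideanLin H) h
        = LinearMap.toContinuousLinearMap (Matrix.toEuclideanLin H) h := rfl
    have e2 := abs_real_inner_le_norm (LinearMap.toContinuousLinearMap (Matrix.toEuclideanLin H) h) h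
    have e3 := (LinearMap.toContinuousLinearMap (Matrix.toEuclideanLin H)).le_opNorm h
    have e4 : ‖LinearMap.toContinuousLinearMap (Matrix.toEuclideanLin H) h‖ * ‖h‖
        ≤ (‖LinearMap.toContinuousLinearMap (Matrix.toEuclideanLin H)‖ * ‖h‖) * ‖h‖ :=
      mul_le_mul_of_nonneg_right e3 (norm_nonneg h)
    have h2 := neg_abs_le (⟪(LinearMap.toContinuousLinearMap (Matrix.toEuclideanLin H)) h, h⟫ : ℝ)
    rw [e1]
    nlinarith
  have key := cubic_lower ‖g‖ ‖LinearMap.toContinuousLinearMap (Matrix.toEuclideanLin H)‖ (L/6) ‖h‖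
    (norm_nonneg g) (norm_nonneg _) hc (norm_nonneg h)
  simp only [cubicModel]
  linarith

theorem stmt_13 {d : ℕ} (g : E d) (H : Matrix (Fin d) (Fin d) ℝ) (hH : H.IsSymm)
    (L : ℝ) (hL : 0 < L) (hneg : lamMin H < 0)
    (ν : E d) (hν : ‖ν‖ = 1) (heig : (Matrix.toEuclideanLin H) ν = lamMin H • ν)
    (htilde : E d)
    (hdef : htilde = (if 0 ≤ ⟪g, ν⟫ then (1:ℝ) else -1) • ((2 * lamMin H / L) • ν)) :
    cubicModel g H L htilde ≤ 2 * (lamMin H)^3 / (3 * L^2) ∧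
    (⨅ h : E d, cubicModel g H L h) ≤ 2 * (lamMin H)^3 / (3 * L^2) ∧
    lamMin H ≥ -(3 * L^2 * |⨅ h : E d, cubicModel g H L h| / 2) ^ ((1:ℝ)/3) := by
  set lam := lamMin H with hlam
  set s : ℝ := if 0 ≤ ⟪g, ν⟫ then (1:ℝ) else -1 with hs
  have hs2 : s^2 = 1 := by
    rw [hs]; by_cases h : 0 ≤ ⟪g, ν⟫
    · rw [if_pos h]; norm_num
    · rw [if_neg h]; norm_num
  have hsabs : s * ⟪g, ν⟫ = |⟪g, ν⟫| := by
    rw [hs]; by_cases h : 0 ≤ ⟪g, ν⟫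
    · rw [if_pos h, one_mul, abs_of_nonneg h]
    · rw [if_neg h, abs_of_neg (lt_of_not_ge h)]; ring
  have h1 : ⟪g, htilde⟫ = s * ((2*lam/L) * ⟪g, ν⟫) := by
    rw [hdef, real_inner_smul_right, real_inner_smul_right]
  have h2 : (Matrix.toEuclideanLin H) htilde = s • ((2*lam/L) • (lam • ν)) := by
    rw [hdef, LinearMap.map_smul, LinearMap.map_smul, heig]
  have h3 : ⟪(Matrix.toEuclideanLin H) htilde, htilde⟫ = s^2 * ((2*lam/L)^2 * lam) := by
    rw [h2, hdef, real_inner_smul_left, real_inner_smul_right, real_inner_smul_left,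
      real_inner_smul_right, real_inner_smul_left, real_inner_self_eq_norm_sq, hν]
    ring
  have h4 : ‖htilde‖ = 2*(-lam)/L := by
    have hsn : ‖s‖ = 1 := by
      rw [hs]; by_cases h : 0 ≤ ⟪g, ν⟫
      · rw [if_pos h]; norm_num
      · rw [if_neg h]; norm_num
    have hlt : 2*lam/L < 0 := div_neg_of_neg_of_pos (by linarith) hL
    rw [hdef, norm_smul, norm_smul, hν, hsn, Real.norm_eq_abs, abs_of_neg hlt]
    ring
  have part1 : cubicModel g H L htilde ≤ 2 * lam^3 / (3 * L^2) := by
    have hA : (0:ℝ) ≤ |⟪g,ν⟫| := abs_nonneg _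
    have hterm : (2*lam/L) * |⟪g,ν⟫| ≤ 0 :=
      mul_nonpos_of_nonpos_of_nonneg (le_of_lt (div_neg_of_neg_of_pos (by linarith) hL)) hA
    simp only [cubicModel]
    rw [h1, h3, h4]
    have key : (1/2) * (s^2 * ((2*lam/L)^2*lam)) + (L/6) * (2*(-lam)/L)^3 = 2*lam^3/(3*L^2) := by
      rw [hs2]; field_simp; ring
    have hrw : s * ((2*lam/L) * ⟪g,ν⟫) = (2*lam/L) * |⟪g,ν⟫| := by rw [← hsabs]; ring
    rw [hrw]
    linarith [key, hterm]
  have part2 : (⨅ h : E d, cubicModel g H L h) ≤ 2 * lam^3 / (3 * L^2) :=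
    le_trans (ciInf_le (cubicModel_bddBelow g H L hL) htilde) part1
  refine ⟨part1, part2, ?_⟩
  have hlam3 : lam^3 < 0 := Odd.pow_neg (by decide) hneg
  have hR : 2 * lam^3 / (3 * L^2) < 0 := div_neg_of_neg_of_pos (by linarith) (by positivity)
  have hinfneg : (⨅ h : E d, cubicModel g H L h) < 0 := lt_of_le_of_lt part2 hR
  have habs : |⨅ h : E d, cubicModel g H L h| = -(⨅ h : E d, cubicModel g H L h) :=
    abs_of_neg hinfneg
  have hmul : 3 * L^2 / 2 * (⨅ h : E d, cubicModel g H L h) ≤ 3 * L^2 / 2 * (2 * lam^3 / (3 * L^2)) :=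
    mul_le_mul_of_nonneg_left part2 (by positivity)
  have heq : 3 * L^2 / 2 * (2 * lam^3 / (3 * L^2)) = lam^3 := by field_simp
  have hX : (-lam)^(3:ℕ) ≤ 3 * L^2 * |⨅ h : E d, cubicModel g H L h| / 2 := by
    rw [habs]; nlinarith [hmul, heq]
  have hnl : 0 < -lam := by linarith
  have hr := Real.rpow_le_rpow (by positivity) hX (by norm_num : (0:ℝ) ≤ 1/3)
  rw [← Real.rpow_natCast (-lam) 3, ← Real.rpow_mul hnl.le,
    show ((3:ℕ):ℝ) * (1/3) = 1 by norm_num, Real.rpow_one] at hr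
  linarith
end
end

section
/- Let f : ℝ^d → ℝ be C² with L-Lipschitz Hessian, x ∈ ℝ^d, g = ∇f(x), H = ∇²f(x), m(h) = ⟨g, h⟩ + (1/2)hᵀHh + (L/6)‖h‖³, and h* a global minimizer of m. Suppose ε > 0, m(h*) ≥ −ε^{3/2}/(800√L), and h' ∈ ℝ^d satisfies ‖h'‖ ≤ ‖h*‖ + √ε/(4√L) and ‖∇m(h')‖ ≤ ε/2. Then ‖∇f(x + h')‖ ≤ ε and λ_min(∇²f(x + h')) ≥ −√(Lε). -/
open Matrix RealInnerProductSpace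

noncomputable section

def dualCLM (d : ℕ) : (E d →L[ℝ] ℝ) →L[ℝ] E d :=
  LinearMap.mkContinuous
    { toFun := fun φ => (InnerProductSpace.toDual ℝ (E d)).symm φ
      map_add' := by intro a b; simp
      map_smul' := by intro c φ; simp } 1
    (by intro φ; simp)

lemma dualCLM_inner {d : ℕ} (φ : E d →L[ℝ] ℝ) (v : E d) : ⟪dualCLM d φ, v⟫ = φ v :=
  InnerProductSpace.toDual_symm_apply

lemma gradient_eq'' {d : ℕ} (f : E d → ℝ) (y : E d) : gradient f y = dualCLM d (fderiv ℝ f y) := rfl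

lemma hasFDerivAt_gradient {d : ℕ} (f : E d → ℝ) (hf : ContDiff ℝ 2 f) (y : E d) :
    HasFDerivAt (gradient f) ((dualCLM d).comp (fderiv ℝ (fderiv ℝ f) y)) y := by
  have hd1 : ContDiff ℝ 1 (fderiv ℝ f) := hf.fderiv_right (by norm_num)
  exact ((dualCLM d).hasFDerivAt).comp y (hd1.differentiable one_ne_zero y).hasFDerivAt

lemma fderiv_gradient_eq {d : ℕ} (f : E d → ℝ) (hf : ContDiff ℝ 2 f) (y : E d) :
    fderiv ℝ (gradient f) y = (dualCLM d).comp (fderiv ℝ (fderiv ℝ f) y) :=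
  (hasFDerivAt_gradient f hf y).fderiv

lemma hess_symm {d : ℕ} (f : E d → ℝ) (hf : ContDiff ℝ 2 f) (y : E d) (u v : E d) :
    ⟪fderiv ℝ (gradient f) y u, v⟫ = ⟪fderiv ℝ (gradient f) y v, u⟫ := by
  rw [fderiv_gradient_eq f hf y]
  simp only [ContinuousLinearMap.comp_apply, dualCLM_inner]
  apply second_derivative_symmetric (f := f) (f' := fderiv ℝ f)
  · intro z; exact (hf.differentiable (by norm_num) z).hasFDerivAt
  · exact ((hf.fderiv_right (m := 1) (by norm_num)).differentiable one_ne_zero y).hasFDerivAt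

lemma taylor_grad {d : ℕ} (L : ℝ) (hL : 0 ≤ L) (f : E d → ℝ) (hf : ContDiff ℝ 2 f)
    (hLip : ∀ y z : E d, ‖fderiv ℝ (gradient f) y - fderiv ℝ (gradient f) z‖ ≤ L * ‖y - z‖)
    (x h : E d) :
    ‖gradient f (x + h) - gradient f x - fderiv ℝ (gradient f) x h‖ ≤ L * ‖h‖ ^ 2 := by
  set H := fderiv ℝ (gradient f) x with hH
  set F : E d → E d := fun z => gradient f z - H z with hF
  have hdiff : ∀ z : E d, HasFDerivAt F (fderiv ℝ (gradient f) z - H) z := by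
    intro z
    exact ((hasFDerivAt_gradient f hf z).congr_fderiv
      (fderiv_gradient_eq f hf z).symm).sub (H.hasFDerivAt)
  have key : ‖F (x + h) - F x‖ ≤ (L * ‖h‖) * ‖(x + h) - x‖ := by
    apply (convex_closedBall x ‖h‖).norm_image_sub_le_of_norm_hasFDerivWithin_le
      (f' := fun z => fderiv ℝ (gradient f) z - H)
      (fun z hz => (hdiff z).hasFDerivWithinAt) ?_ (Metric.mem_closedBall_self (norm_nonneg h)) ?_
    · intro z hz
      calc ‖fderiv ℝ (gradient f) z - H‖ ≤ L * ‖z - x‖ := hLip z x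
        _ ≤ L * ‖h‖ := mul_le_mul_of_nonneg_left (mem_closedBall_iff_norm.mp hz) hL
    · simpa [dist_eq_norm] using (le_refl ‖h‖)
  have e1 : F (x + h) - F x = gradient f (x + h) - gradient f x - H h := by
    simp only [hF]
    rw [map_add]
    abel
  rw [e1] at key
  calc ‖gradient f (x + h) - gradient f x - H h‖ ≤ (L * ‖h‖) * ‖(x+h) - x‖ := key
    _ = L * ‖h‖ ^ 2 := by simp [add_sub_cancel_left]; ring

lemma aux_limit {a b c : ℝ} (h : ∀ t : ℝ, 0 < t → t ≤ 1 → a ≤ b + c * t) : a ≤ b := by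
  by_contra hab
  push_neg at hab
  rcases le_or_gt c 0 with hc | hc
  · have h1 := h 1 one_pos le_rfl
    nlinarith
  · have ht0 : 0 < min 1 ((a - b) / (2 * c)) := lt_min one_pos (div_pos (by linarith) (by linarith))
    have h1 := h _ ht0 (min_le_left _ _)
    have h2 : c * min 1 ((a - b) / (2 * c)) ≤ c * ((a - b) / (2 * c)) :=
      mul_le_mul_of_nonneg_left (min_le_right _ _) hc.le
    have h3 : c * ((a - b) / (2 * c)) = (a - b) / 2 := by field_simp
    linarith

set_option maxHeartbeats 2000000 in
theorem stmt_14 {d : ℕ} (L : ℝ) (hL : 0 < L) (f : E d → ℝ) (hf : ContDiff ℝ 2 f)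
    (hLip : ∀ y z : E d, ‖fderiv ℝ (gradient f) y - fderiv ℝ (gradient f) z‖ ≤ L * ‖y - z‖)
    (x : E d)
    (m : E d → ℝ)
    (hm : ∀ h : E d, m h = ⟪gradient f x, h⟫ + (1/2) * ⟪fderiv ℝ (gradient f) x h, h⟫
      + (L/6) * ‖h‖^3)
    (hstar : E d) (hmin : ∀ h : E d, m hstar ≤ m h)
    (ε : ℝ) (hε : 0 < ε)
    (hval : m hstar ≥ -(ε ^ ((3:ℝ)/2)) / (800 * Real.sqrt L))
    (h' : E d)
    (hnorm : ‖h'‖ ≤ ‖hstar‖ + Real.sqrt ε / (4 * Real.sqrt L))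
    (hgrad : ‖gradient f x + fderiv ℝ (gradient f) x h' + (L/2 * ‖h'‖) • h'‖ ≤ ε / 2) :
    ‖gradient f (x + h')‖ ≤ ε ∧ hessLamMin f (x + h') ≥ -Real.sqrt (L * ε) := by
  obtain ⟨g, hgdef⟩ : ∃ g : E d, g = gradient f x := ⟨_, rfl⟩
  obtain ⟨H, hHdef⟩ : ∃ H : E d →L[ℝ] E d, H = fderiv ℝ (gradient f) x := ⟨_, rfl⟩
  obtain ⟨s, hsdef⟩ : ∃ s : ℝ, s = ‖hstar‖ := ⟨_, rfl⟩
  rw [← hgdef, ← hHdef] at hgrad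
  rw [← hsdef] at hnorm
  have hm' : ∀ h : E d, m h = ⟪g, h⟫ + (1/2) * ⟪H h, h⟫ + (L/6) * ‖h‖^3 := by
    intro h; rw [hm, hgdef, hHdef]
  have hs0 : 0 ≤ s := hsdef ▸ norm_nonneg _
  have hsL : 0 < Real.sqrt L := Real.sqrt_pos.mpr hL
  have hsL2 : Real.sqrt L * Real.sqrt L = L := Real.mul_self_sqrt hL.le
  have hsE : 0 < Real.sqrt ε := Real.sqrt_pos.mpr hε
  have hsE2 : Real.sqrt ε * Real.sqrt ε = ε := Real.mul_self_sqrt hε.le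
  obtain ⟨T, hTdef⟩ : ∃ T : ℝ, T = Real.sqrt ε / (4 * Real.sqrt L) := ⟨_, rfl⟩
  rw [← hTdef] at hnorm
  have hT0 : 0 < T := by rw [hTdef]; positivity
  -- expansion of the model
  have hexp : ∀ w : E d, m (hstar + w)
      = m hstar + ⟪g, w⟫ + ⟪H hstar, w⟫ + (1/2) * ⟪H w, w⟫
        + (L/6) * (‖hstar + w‖^3 - s^3) := by
    intro w
    rw [hm', hm', hsdef]
    have h1 : H (hstar + w) = H hstar + H w := map_add _ _ _
    rw [h1]
    rw [inner_add_right (𝕜 := ℝ), inner_add_left (𝕜 := ℝ), inner_add_right (𝕜 := ℝ),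
      inner_add_right (𝕜 := ℝ)]
    have h2 : ⟪H w, hstar⟫ = ⟪H hstar, w⟫ := by
      rw [hHdef]; exact hess_symm f hf x w hstar
    rw [h2]
    ring
  -- norm-square expansion
  have hQ : ∀ (w : E d) (t : ℝ), ‖hstar + t • w‖^2
      = s^2 + 2 * (⟪hstar, w⟫ * t) + t^2 * ‖w‖^2 := by
    intro w t
    rw [hsdef, @norm_add_sq_real]
    rw [real_inner_smul_right, norm_smul]
    simp [mul_pow, sq_abs]
    ring
  have hcube : ∀ y : E d, ‖y‖^3 = ‖y‖^2 * Real.sqrt (‖y‖^2) := by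
    intro y
    rw [Real.sqrt_sq (norm_nonneg y)]
    ring
  -- scalar expansion along hstar
  obtain ⟨a, hadef⟩ : ∃ a : ℝ, a = ⟪g, hstar⟫ := ⟨_, rfl⟩
  obtain ⟨b, hbdef⟩ : ∃ b : ℝ, b = ⟪H hstar, hstar⟫ := ⟨_, rfl⟩
  obtain ⟨c, hcdef⟩ : ∃ c : ℝ, c = L * s^3 := ⟨_, rfl⟩
  have hma : ∀ α : ℝ, m (α • hstar) = α * a + α^2 * (b/2) + |α|^3 * (c/6) := by
    intro α
    rw [hm', hadef, hbdef, hcdef, hsdef]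
    rw [real_inner_smul_right, H.map_smul, inner_smul_left (𝕜 := ℝ), real_inner_smul_right,
      norm_smul]
    simp only [RCLike.star_def, conj_trivial, Real.norm_eq_abs]
    rw [mul_pow]
    push_cast
    ring
  have hm1 : m hstar = a + b/2 + c/6 := by
    have := hma 1
    simpa using this
  -- a ≤ 0
  have ha_nonpos : a ≤ 0 := by
    have h1 := hmin ((-1 : ℝ) • hstar)
    rw [hma (-1), hm1] at h1
    simp at h1
    linarith
  -- first scalar optimality: a + b + c/2 = 0
  have hq : ∀ t : ℝ, -1 ≤ t →
      0 ≤ (a + b + c/2) * t + (b/2 + c/2) * t^2 + (c/6) * t^3 := by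
    intro t ht
    have h1 := hmin ((1 + t) • hstar)
    rw [hma (1 + t), hm1] at h1
    rw [abs_of_nonneg (by linarith : (0:ℝ) ≤ 1 + t)] at h1
    nlinarith [h1]
  have hB : 0 ≤ b/2 + c/2 := by
    have h1 := hq 1 (by norm_num)
    have h2 := hq (-1) (by norm_num)
    nlinarith
  have hA : a + b + c/2 = 0 := by
    have habs : |a + b + c/2| ≤ 0 := by
      apply aux_limit (c := (b/2 + c/2) + |c/6|)
      intro t ht0 ht1
      have h1 := hq t (by linarith)
      have h2 := hq (-t) (by linarith)
      have hC3 : (c/6) * t^3 ≤ |c/6| * t^2 := by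
        calc (c/6) * t^3 ≤ |c/6| * t^3 := by
              nlinarith [le_abs_self (c/6), pow_nonneg ht0.le 3]
          _ ≤ |c/6| * t^2 := by
              nlinarith [mul_nonneg (abs_nonneg (c/6))
                (mul_nonneg (mul_pos ht0 ht0).le (sub_nonneg.mpr ht1))]
      have hC4 : -((c/6) * t^3) ≤ |c/6| * t^2 := by
        calc -((c/6) * t^3) ≤ |c/6| * t^3 := by
              nlinarith [neg_abs_le (c/6), pow_nonneg ht0.le 3]
          _ ≤ |c/6| * t^2 := by
              nlinarith [mul_nonneg (abs_nonneg (c/6))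
                (mul_nonneg (mul_pos ht0 ht0).le (sub_nonneg.mpr ht1))]
      rw [abs_le]
      constructor
      · have key : -(a + b + c/2) * t ≤ (0 + ((b/2 + c/2) + |c/6|) * t) * t := by
          nlinarith
        have := (mul_le_mul_iff_of_pos_right ht0).mp key
        linarith
      · have key : (a + b + c/2) * t ≤ (0 + ((b/2 + c/2) + |c/6|) * t) * t := by
          nlinarith
        have := (mul_le_mul_iff_of_pos_right ht0).mp key
        linarith
    exact abs_eq_zero.mp (le_antisymm habs (abs_nonneg _))
  -- m hstar ≤ -c/12 and s ≤ T
  have hmc : m hstar ≤ -(c/12) := by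
    have hbc : -(c/2) ≤ b := by linarith
    rw [hm1]
    linarith
  have hrpow : ε ^ ((3:ℝ)/2) = Real.sqrt ε ^ 3 := by
    rw [show ((3:ℝ)/2) = (1/2) * (3:ℕ) by norm_num, Real.rpow_mul hε.le,
      Real.rpow_natCast, ← Real.sqrt_eq_rpow]
  have hsT : s ≤ T := by
    have hv := hval
    rw [hrpow] at hv
    have h2 : -(Real.sqrt ε ^ 3) / (800 * Real.sqrt L) ≤ -(c/12) := le_trans hv hmc
    rw [neg_div] at h2
    have h3 : c ≤ 12 * (Real.sqrt ε ^ 3 / (800 * Real.sqrt L)) := by linarith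
    rw [hcdef] at h3
    have hYpos : (0:ℝ) < 800 * Real.sqrt L := by positivity
    have h1' : L * s^3 * (800 * Real.sqrt L) ≤ 12 * Real.sqrt ε ^ 3 := by
      have h5 := mul_le_mul_of_nonneg_right h3 hYpos.le
      rw [mul_assoc 12, div_mul_cancel₀ _ (ne_of_gt hYpos)] at h5
      linarith
    have hL3 : (4 * Real.sqrt L)^3 = 64 * (L * Real.sqrt L) := by
      have : (4 * Real.sqrt L)^3 = 64 * ((Real.sqrt L * Real.sqrt L) * Real.sqrt L) := by ring
      rw [this, hsL2]
    have hT3eq : T^3 = Real.sqrt ε ^ 3 / (64 * (L * Real.sqrt L)) := by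
      rw [hTdef, div_pow, hL3]
    have h4 : s^3 ≤ T^3 := by
      rw [hT3eq, le_div_iff₀ (by positivity : (0:ℝ) < 64 * (L * Real.sqrt L))]
      nlinarith [h1', pow_nonneg hsE.le 3]
    by_contra hc2
    push_neg at hc2
    have : T^3 < s^3 := by
      have := pow_lt_pow_left₀ hc2 hT0.le (by norm_num : (3:ℕ) ≠ 0)
      simpa using this
    linarith
  -- second-order optimality: Rayleigh quotient of H bounded below by -(L/2)s
  have hSO : ∀ v : E d, ‖v‖ = 1 → -(L/2 * s) ≤ ⟪H v, v⟫ := by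
    have claim : ∀ v : E d, ‖v‖ = 1 → ⟪hstar, v⟫ ≤ 0 → -(L/2 * s) ≤ ⟪H v, v⟫ := by
      intro v hv huv
      have hinner_sq : ∀ (w : E d) (t : ℝ), ⟪H (t • w), t • w⟫ = t^2 * ⟪H w, w⟫ := by
        intro w t
        rw [H.map_smul, inner_smul_left (𝕜 := ℝ), real_inner_smul_right]
        simp only [RCLike.star_def, conj_trivial]
        ring
      rcases eq_or_lt_of_le hs0 with hs_eq | hs_pos
      · -- case hstar = 0
        have hstar0 : hstar = 0 := by
          have : ‖hstar‖ = 0 := by rw [← hsdef]; exact hs_eq.symm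
          exact norm_eq_zero.mp this
        have hXpos : -⟪H v, v⟫ ≤ 0 := by
          apply aux_limit (c := L/3)
          intro t ht0 ht1
          have e1 := hmin (hstar + t • v)
          have e2 := hmin (hstar + (-t) • v)
          rw [hexp (t • v)] at e1
          rw [hexp ((-t) • v)] at e2
          rw [hstar0] at e1 e2
          simp only [map_zero, inner_zero_left, zero_add] at e1 e2
          rw [hinner_sq v t] at e1
          rw [hinner_sq v (-t)] at e2
          have hnt : ‖t • v‖ = t := by
            rw [norm_smul, hv, Real.norm_eq_abs, abs_of_pos ht0, mul_one]
          have hnt' : ‖(-t) • v‖ = t := by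
            rw [norm_smul, hv, Real.norm_eq_abs, abs_neg, abs_of_pos ht0, mul_one]
          rw [hnt] at e1
          rw [hnt'] at e2
          have hs3 : s ^ 3 = 0 := by rw [← hs_eq]; ring
          rw [hs3] at e1 e2
          rw [real_inner_smul_right g v t] at e1
          rw [real_inner_smul_right g v (-t)] at e2
          nlinarith [e1, e2, mul_pos ht0 ht0]
        have : s = ‖hstar‖ := hsdef
        rw [hstar0, norm_zero] at this
        rw [this]
        linarith
      · -- case s > 0 : first-order condition
        have hsne : s ≠ 0 := ne_of_gt hs_pos
        have foc : ∀ w : E d, ⟪g, w⟫ + ⟪H hstar, w⟫ + (L/2) * s * ⟪hstar, w⟫ = 0 := by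
          intro w
          obtain ⟨u, hudef⟩ : ∃ u : ℝ, u = ⟪hstar, w⟫ := ⟨_, rfl⟩
          have hss : Real.sqrt (s^2) = s := Real.sqrt_sq hs_pos.le
          have hQfd : HasDerivAt (fun t : ℝ => s^2 + 2 * (u * t) + t^2 * ‖w‖^2) (2 * u) 0 := by
            have h1 : HasDerivAt (fun t : ℝ => u * t) u 0 := by
              simpa using (hasDerivAt_id (0:ℝ)).const_mul u
            have h2 : HasDerivAt (fun t : ℝ => t^2) 0 0 := by
              simpa using hasDerivAt_pow 2 (0:ℝ)
            have h3 := ((h1.const_mul 2).const_add (s^2)).add (h2.mul_const (‖w‖^2))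
            simp only [zero_mul, add_zero] at h3
            exact h3
          have hQ0 : s^2 + 2 * (u * 0) + 0^2 * ‖w‖^2 = s^2 := by ring
          have hQpos : s^2 + 2 * (u * 0) + 0^2 * ‖w‖^2 ≠ 0 := by
            rw [hQ0]; positivity
          have hsqd : HasDerivAt (fun t : ℝ => Real.sqrt (s^2 + 2 * (u * t) + t^2 * ‖w‖^2))
              (1/(2 * Real.sqrt (s^2)) * (2 * u)) 0 := by
            have h4 := (Real.hasDerivAt_sqrt hQpos).comp 0 hQfd
            simp only [Function.comp_def] at h4
            rw [hQ0] at h4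
            convert h4 using 1
          have hprod : HasDerivAt (fun t : ℝ => (s^2 + 2 * (u * t) + t^2 * ‖w‖^2)
                * Real.sqrt (s^2 + 2 * (u * t) + t^2 * ‖w‖^2))
              (2 * u * Real.sqrt (s^2) + s^2 * (1/(2 * Real.sqrt (s^2)) * (2 * u))) 0 := by
            have h5 := hQfd.mul hsqd
            rw [hQ0] at h5
            exact h5
          have hψd : HasDerivAt (fun t : ℝ => m hstar + t * ⟪g, w⟫ + t * ⟪H hstar, w⟫
              + (t^2/2) * ⟪H w, w⟫ + (L/6) * ((s^2 + 2 * (u * t) + t^2 * ‖w‖^2)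
                * Real.sqrt (s^2 + 2 * (u * t) + t^2 * ‖w‖^2) - s^3))
              (⟪g, w⟫ + ⟪H hstar, w⟫ + 0
                + (L/6) * (2 * u * Real.sqrt (s^2) + s^2 * (1/(2 * Real.sqrt (s^2)) * (2 * u)))) 0 := by
            have hl1 : HasDerivAt (fun t : ℝ => t * ⟪g, w⟫) ⟪g, w⟫ 0 := by
              simpa using (hasDerivAt_id (0:ℝ)).mul_const ⟪g, w⟫
            have hl2 : HasDerivAt (fun t : ℝ => t * ⟪H hstar, w⟫) ⟪H hstar, w⟫ 0 := by
              simpa using (hasDerivAt_id (0:ℝ)).mul_const ⟪H hstar, w⟫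
            have hsq : HasDerivAt (fun t : ℝ => (t^2/2) * ⟪H w, w⟫) 0 0 := by
              have h2 : HasDerivAt (fun t : ℝ => t^2) 0 0 := by
                simpa using hasDerivAt_pow 2 (0:ℝ)
              have := (h2.div_const 2).mul_const ⟪H w, w⟫
              simpa using this
            have hcu := (hprod.sub_const (s^3)).const_mul (L/6)
            have h6 := (((((hasDerivAt_const (0:ℝ) (m hstar)).add hl1).add hl2).add hsq).add hcu)
            refine h6.congr_deriv ?_
            ring
          have hψeq : (fun t : ℝ => m (hstar + t • w)) = (fun t : ℝ => m hstar + t * ⟪g, w⟫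
              + t * ⟪H hstar, w⟫ + (t^2/2) * ⟪H w, w⟫
              + (L/6) * ((s^2 + 2 * (u * t) + t^2 * ‖w‖^2)
                * Real.sqrt (s^2 + 2 * (u * t) + t^2 * ‖w‖^2) - s^3)) := by
            funext t
            rw [hexp (t • w)]
            rw [real_inner_smul_right g, real_inner_smul_right (H hstar), hinner_sq w t]
            rw [hcube (hstar + t • w), hQ w t, ← hudef]
            ring
          have hloc : IsLocalMin (fun t : ℝ => m (hstar + t • w)) 0 := by
            apply Filter.Eventually.of_forall
            intro t
            show m (hstar + (0:ℝ) • w) ≤ m (hstar + t • w)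
            have h0 : hstar + (0:ℝ) • w = hstar := by simp
            rw [h0]
            exact hmin _
          have hd1 : deriv (fun t : ℝ => m (hstar + t • w)) 0 = 0 := hloc.deriv_eq_zero
          rw [hψeq] at hd1
          have hd2 := hψd.deriv
          rw [hd1] at hd2
          rw [hss] at hd2
          rw [← hudef]
          have he : s^2 * (1/(2*s) * (2*u)) = s * u := by
            field_simp
          rw [he] at hd2
          linarith
        have hkey : ∀ w : E d, 0 ≤ (1/2) * ⟪H w, w⟫ - (L/2) * s * ⟪hstar, w⟫
            + (L/6) * (‖hstar + w‖^3 - s^3) := by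
          intro w
          have h1 := hmin (hstar + w)
          rw [hexp w] at h1
          have h2 := foc w
          linarith
        rcases huv.lt_or_eq with hu_neg | hu_zero
        · obtain ⟨t0, ht0def⟩ : ∃ t0 : ℝ, t0 = -2 * ⟪hstar, v⟫ := ⟨_, rfl⟩
          have ht0pos : 0 < t0 := by rw [ht0def]; linarith
          have h1 := hkey (t0 • v)
          rw [hinner_sq v t0, real_inner_smul_right hstar] at h1
          have hnrm : ‖hstar + t0 • v‖ = s := by
            have h2 : ‖hstar + t0 • v‖^2 = s^2 := by
              rw [hQ v t0, hv, ht0def]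
              ring
            calc ‖hstar + t0 • v‖ = Real.sqrt (‖hstar + t0 • v‖^2) :=
                  (Real.sqrt_sq (norm_nonneg _)).symm
              _ = Real.sqrt (s^2) := by rw [h2]
              _ = s := Real.sqrt_sq hs_pos.le
          rw [hnrm, ht0def] at h1
          nlinarith [h1, mul_pos_of_neg_of_neg hu_neg hu_neg]
        · have hfin : -⟪H v, v⟫ ≤ L/2 * s := by
            apply aux_limit (c := L/(6*s))
            intro t ht0 ht1
            have h1 := hkey (t • v)
            rw [hinner_sq v t, real_inner_smul_right hstar, hu_zero] at h1
            have hsq2 : ‖hstar + t • v‖^2 = s^2 + t^2 := by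
              rw [hQ v t, hv, hu_zero]
              ring
            have hAM : 2*s*‖hstar + t • v‖ ≤ 2*s^2 + t^2 := by
              nlinarith [sq_nonneg (s - ‖hstar + t • v‖), hsq2]
            have hB3 : ‖hstar + t • v‖^3 = ‖hstar + t • v‖^2 * ‖hstar + t • v‖ := by
              ring
            have hsB3 : s * ‖hstar + t • v‖^3 ≤ s^4 + 3/2*s^2*t^2 + t^4/2 := by
              rw [hB3, hsq2]
              nlinarith [mul_le_mul_of_nonneg_left hAM
                (by positivity : (0:ℝ) ≤ (s^2 + t^2)/2)]
            have h6 : 0 ≤ (s/2) * (t^2 * ⟪H v, v⟫) + (L/4)*s^2*t^2 + (L/12)*t^4 := by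
              have h3 := mul_le_mul_of_nonneg_left h1 hs_pos.le
              linarith [h3, mul_le_mul_of_nonneg_left hsB3 (by positivity : (0:ℝ) ≤ L/6)]
            have ht4 : t^4 ≤ t^3 := by
              nlinarith [mul_nonneg (pow_pos ht0 3).le (by linarith : (0:ℝ) ≤ 1 - t)]
            have hre : (L/2 * s + L/(6*s) * t) * (s * t^2)
                = L/2*s^2*t^2 + L/6*t^3 := by
              field_simp
            have h7 : (-⟪H v, v⟫) * (s * t^2) ≤ (L/2 * s + L/(6*s) * t) * (s * t^2) := by
              rw [hre]
              linarith [h6, mul_le_mul_of_nonneg_left ht4 (by positivity : (0:ℝ) ≤ L/6)]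
            have h8 := (mul_le_mul_iff_of_pos_right (by positivity : (0:ℝ) < s * t^2)).mp h7
            linarith
          linarith
    intro v hv
    rcases le_or_gt ⟪hstar, v⟫ 0 with huv | huv
    · exact claim v hv huv
    · have h1 := claim (-v) (by rw [norm_neg]; exact hv)
        (by rw [inner_neg_right (𝕜 := ℝ)]; linarith)
      have h2 : ⟪H (-v), -v⟫ = ⟪H v, v⟫ := by
        rw [map_neg, inner_neg_neg]
      rw [h2] at h1
      exact h1
  -- size of h'
  have hh' : ‖h'‖ ≤ 2 * T := by linarith
  have hT2 : T^2 = ε / (16 * L) := by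
    rw [hTdef, div_pow]
    rw [Real.sq_sqrt hε.le]
    congr 1
    rw [mul_pow]
    rw [sq (Real.sqrt L), hsL2]
    norm_num
  have hr2 : ‖h'‖^2 ≤ ε / (4 * L) := by
    have h1 : ‖h'‖^2 ≤ (2*T)^2 := by
      nlinarith [norm_nonneg h', hT0]
    rw [show ((2:ℝ)*T)^2 = 4 * T^2 by ring, hT2] at h1
    calc ‖h'‖^2 ≤ 4 * (ε / (16 * L)) := h1
      _ = ε / (4 * L) := by field_simp; ring
  have htay := taylor_grad L hL.le f hf hLip x h'
  rw [← hgdef, ← hHdef] at htay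
  constructor
  · -- gradient bound
    have hdecomp : gradient f (x + h')
        = (gradient f (x + h') - g - H h') + (g + H h' + (L/2 * ‖h'‖) • h')
          - (L/2 * ‖h'‖) • h' := by
      abel
    have hn3 : ‖(L/2 * ‖h'‖) • h'‖ = L/2 * ‖h'‖^2 := by
      rw [norm_smul, Real.norm_eq_abs, abs_of_nonneg (by positivity)]
      ring
    have hub : ‖gradient f (x + h')‖ ≤ L * ‖h'‖^2 + ε/2 + L/2 * ‖h'‖^2 := by
      rw [hdecomp]
      refine le_trans (norm_sub_le _ _) ?_
      rw [hn3]
      have h9 := norm_add_le (gradient f (x + h') - g - H h') (g + H h' + (L/2 * ‖h'‖) • h')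
      linarith
    have h10 : L * ‖h'‖^2 ≤ ε/4 := by
      have := mul_le_mul_of_nonneg_left hr2 hL.le
      calc L * ‖h'‖^2 ≤ L * (ε / (4 * L)) := this
        _ = ε/4 := by field_simp
    linarith
  · -- Hessian eigenvalue bound
    have hLip' : ‖fderiv ℝ (gradient f) (x + h') - H‖ ≤ L * ‖h'‖ := by
      rw [hHdef]
      have h1 := hLip (x + h') x
      rw [add_sub_cancel_left] at h1
      exact h1
    rw [ge_iff_le]
    unfold hessLamMin
    by_cases hS : {r : ℝ | ∃ v : E d, ‖v‖ = 1 ∧ ⟪fderiv ℝ (gradient f) (x + h') v, v⟫ = r}.Nonempty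
    · apply le_csInf hS
      rintro r ⟨v, hv, rfl⟩
      have hdiff : ⟪fderiv ℝ (gradient f) (x + h') v, v⟫ - ⟪H v, v⟫
          = ⟪(fderiv ℝ (gradient f) (x + h') - H) v, v⟫ := by
        rw [ContinuousLinearMap.sub_apply, inner_sub_left (𝕜 := ℝ)]
      have habs : |⟪(fderiv ℝ (gradient f) (x + h') - H) v, v⟫| ≤ L * ‖h'‖ := by
        refine le_trans (abs_real_inner_le_norm _ _) ?_
        have h1 := (fderiv ℝ (gradient f) (x + h') - H).le_opNorm v
        rw [hv, mul_one] at h1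
        rw [hv, mul_one]
        exact le_trans h1 hLip'
      have h1 := hSO v hv
      have hsqrt : Real.sqrt (L * ε) = Real.sqrt L * Real.sqrt ε := Real.sqrt_mul hL.le ε
      have hLT : L * T = Real.sqrt L * Real.sqrt ε / 4 := by
        rw [hTdef]
        field_simp
        nlinarith [hsL2]
      have h2 : L * ‖h'‖ ≤ 2 * (L * T) := by
        have := mul_le_mul_of_nonneg_left hh' hL.le
        linarith
      have h3 : L * s ≤ L * T := mul_le_mul_of_nonneg_left hsT hL.le
      have h4 : 0 ≤ Real.sqrt L * Real.sqrt ε := by positivity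
      have h5 : -(L * ‖h'‖) ≤ ⟪fderiv ℝ (gradient f) (x + h') v, v⟫ - ⟪H v, v⟫ := by
        rw [hdiff]
        linarith [neg_abs_le ⟪(fderiv ℝ (gradient f) (x + h') - H) v, v⟫]
      rw [hsqrt]
      linarith
    · rw [Set.not_nonempty_iff_eq_empty] at hS
      rw [hS, Real.sInf_empty]
      exact neg_nonpos.mpr (Real.sqrt_nonneg _)
end
end

section
/- Let H be symmetric, g ∈ ℝ^d, λ ∈ ℝ with H + λI positive definite, L > 0, ε̃ > 0, and let v satisfy ‖v + (H + λI)^{-1}g‖ ≤ ε̃. Then ‖∇m(v)‖ ≤ ‖H + λI‖·ε̃ + λ·‖v‖ + L‖v‖², where m(h) = ⟨g, h⟩ + (1/2)hᵀHh + (L/6)‖h‖³ and ∇m(v) = g + Hv + (L/2)‖v‖v, assuming additionally λ ≥ 0. -/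
open Matrix RealInnerProductSpace

noncomputable section

theorem stmt_16 {d : ℕ} (g : E d) (H : Matrix (Fin d) (Fin d) ℝ) (hH : H.IsSymm)
    (L : ℝ) (hL : 0 < L) (lam : ℝ) (hlam : 0 ≤ lam)
    (hpd : (H + lam • 1).PosDef)
    (ε' : ℝ) (hε' : 0 < ε') (v : E d)
    (hv : ‖v + (Matrix.toEuclideanLin ((H + lam • 1)⁻¹)) g‖ ≤ ε') :
    ‖g + (Matrix.toEuclideanLin H) v + (L/2 * ‖v‖) • v‖
      ≤ ‖Matrix.toEuclideanCLM (𝕜 := ℝ) (n := Fin d) (H + lam • 1)‖ * ε' + lam * ‖v‖ + L * ‖v‖^2 := by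
  set M := H + lam • (1 : Matrix (Fin d) (Fin d) ℝ) with hM
  set A := Matrix.toEuclideanCLM (𝕜 := ℝ) (n := Fin d) M with hA
  have hunit : IsUnit M.det := isUnit_iff_ne_zero.mpr hpd.det_pos.ne'
  set w : E d := v + (Matrix.toEuclideanLin M⁻¹) g with hw
  have hAeq : ∀ x : E d, A x = Matrix.toEuclideanLin M x := fun x => by
    have h1 : (A : E d →ₗ[ℝ] E d) = Matrix.toEuclideanLin M :=
      Matrix.coe_toEuclideanCLM_eq_toEuclideanLin M
    exact congrFun (congrArg (fun (f : E d →ₗ[ℝ] E d) => (f : E d → E d)) h1) x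
  have key : A w = g + (Matrix.toEuclideanLin H) v + lam • v := by
    rw [hAeq, hw, map_add]
    have h2 : Matrix.toEuclideanLin M ((Matrix.toEuclideanLin M⁻¹) g) = g := by
      simp only [Matrix.toEuclideanLin_apply, Equiv.apply_symm_apply, Matrix.mulVec_mulVec,
        Matrix.mul_nonsing_inv M hunit, Matrix.one_mulVec, Equiv.symm_apply_apply]
    have h3 : Matrix.toEuclideanLin M v = Matrix.toEuclideanLin H v + lam • v := by
      rw [hM, map_add]
      congr 1
      simp only [_root_.map_smul]
      congr 1
      simp [Matrix.toEuclideanLin_apply, Matrix.one_mulVec]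
    rw [h2, h3]; abel
  have hexpr : g + (Matrix.toEuclideanLin H) v + (L/2 * ‖v‖) • v
      = A w + ((-lam) • v + (L/2 * ‖v‖) • v) := by
    rw [key]; module
  rw [hexpr]
  have h4 : ‖A w + ((-lam) • v + (L/2 * ‖v‖) • v)‖
      ≤ ‖A w‖ + (‖(-lam) • v‖ + ‖(L/2 * ‖v‖) • v‖) :=
    (norm_add_le _ _).trans (by gcongr; exact norm_add_le _ _)
  refine h4.trans ?_
  have h5 : ‖A w‖ ≤ ‖A‖ * ε' := (A.le_opNorm w).trans (by gcongr)
  have h6 : ‖(-lam) • v‖ = lam * ‖v‖ := by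
    rw [norm_smul]; simp [abs_of_nonneg hlam]
  have h7 : ‖(L/2 * ‖v‖) • v‖ ≤ L * ‖v‖^2 := by
    rw [norm_smul, Real.norm_eq_abs, abs_of_nonneg (by positivity)]
    nlinarith [norm_nonneg v]
  linarith
end
end
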